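/- arXiv:2406.11412 — 9 statements merged into one kernel-verified Lean document; each statement's English description precedes it below -/
import Mathlib

section
/- Let G_S be a graph with n ≥ 2 vertices, m edges and σ self-loops, with adjacency eigenvalues λ_1,…,λ_n. If μ_max = max_i |λ_i − σ/n| and μ_min = min_i |λ_i − σ/n|, then E(G_S) ≤ √( n(2m + σ − σ²/n) − (n/2)(μ_max − μ_min)² ). -/
open Matrix in
lemma my_trace_eq_sum_eigen {N : Type*} [Fintype N] [DecidableEq N] (A : Matrix N N ℝ)
    (hA : A.IsHermitian) : A.trace = ∑ i, hA.eigenvalues i := by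
  set U := (hA.eigenvectorUnitary : Matrix N N ℝ) with hUdef
  have hU : star U * U = 1 := Matrix.mem_unitaryGroup_iff'.mp hA.eigenvectorUnitary.2
  nth_rewrite 1 [show A = (hA.eigenvectorUnitary : Matrix N N ℝ) * diagonal ((RCLike.ofReal ∘ hA.eigenvalues : N → ℝ)) * star (hA.eigenvectorUnitary : Matrix N N ℝ) from hA.spectral_theorem]
  rw [Matrix.trace_mul_comm, ← mul_assoc, ← hUdef, hU, one_mul, Matrix.trace_diagonal]
  simp

open Matrix in
lemma my_trace_sq_eq_sum_eigen_sq {N : Type*} [Fintype N] [DecidableEq N] (A : Matrix N N ℝ)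
    (hA : A.IsHermitian) : (A * A).trace = ∑ i, hA.eigenvalues i ^ 2 := by
  set U := (hA.eigenvectorUnitary : Matrix N N ℝ) with hUdef
  set D := Matrix.diagonal ((RCLike.ofReal ∘ hA.eigenvalues : N → ℝ)) with hDdef
  have hU : star U * U = 1 := Matrix.mem_unitaryGroup_iff'.mp hA.eigenvectorUnitary.2
  have h1 : A = U * D * star U := hA.spectral_theorem
  have h : A * A = U * (D * D) * star U := by
    rw [h1]
    simp only [Matrix.mul_assoc]
    rw [← Matrix.mul_assoc (star U) U, hU, one_mul]
  rw [h, Matrix.trace_mul_comm, ← mul_assoc, hU, one_mul, hDdef,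
    Matrix.diagonal_mul_diagonal, Matrix.trace_diagonal]
  simp [sq]

lemma key_ineq (n : ℕ) (hn : 2 ≤ n) (f : Fin n → ℝ) (M m : ℝ)
    (hub : ∀ i, f i ≤ M) (hlb : ∀ i, m ≤ f i)
    (i₀ j₀ : Fin n) (hM : f i₀ = M) (hm : f j₀ = m) :
    (∑ i, f i) ^ 2 ≤ n * (∑ i, (f i) ^ 2) - n / 2 * (M - m) ^ 2 := by
  have hid : ∑ i, ∑ j, (f i - f j) ^ 2
      = 2 * n * (∑ i, (f i) ^ 2) - 2 * (∑ i, f i) ^ 2 := by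
    have h : ∀ i : Fin n, ∀ j : Fin n, (f i - f j) ^ 2
        = f i ^ 2 - 2 * (f i * f j) + f j ^ 2 := by intro i j; ring
    simp only [h, Finset.sum_add_distrib, Finset.sum_sub_distrib, ← Finset.mul_sum,
      ← Finset.sum_mul, Finset.sum_const, Finset.card_univ, Fintype.card_fin, nsmul_eq_mul]
    ring
  have hkey : (n : ℝ) * (M - m) ^ 2 ≤ ∑ i, ∑ j, (f i - f j) ^ 2 := by
    by_cases hne : i₀ = j₀
    · have hMm : M = m := by rw [← hM, hne, hm]
      have h0 : (0:ℝ) ≤ ∑ i, ∑ j, (f i - f j) ^ 2 :=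
        Finset.sum_nonneg fun i _ => Finset.sum_nonneg fun j _ => sq_nonneg _
      rw [hMm]
      simpa using h0
    · set c : ℝ := (M - m) ^ 2 with hc
      set P : Finset (Fin n) := {i₀, j₀} with hP
      have hsplit : ∀ g : Fin n → ℝ,
          ∑ j, g j = ∑ j ∈ Finset.univ \ P, g j + (g i₀ + g j₀) := by
        intro g
        rw [← Finset.sum_sdiff (Finset.subset_univ P), Finset.sum_pair hne]
      have hcard : ((Finset.univ \ P).card : ℝ) = (n : ℝ) - 2 := by
        rw [Finset.card_sdiff_of_subset (Finset.subset_univ P), Finset.card_univ, Fintype.card_fin,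
          Finset.card_pair hne, Nat.cast_sub hn]
        norm_num
      have hhalf : ∀ x : ℝ, m ≤ x → x ≤ M → c / 2 ≤ (x - M) ^ 2 + (x - m) ^ 2 := by
        intro x h1 h2
        rw [hc]
        nlinarith [sq_nonneg (M - x - (x - m))]
      have hrow : ∀ i, (f i - M) ^ 2 + (f i - m) ^ 2 ≤ ∑ j, (f i - f j) ^ 2 := by
        intro i
        rw [hsplit (fun j => (f i - f j) ^ 2)]
        have h0 : (0:ℝ) ≤ ∑ j ∈ Finset.univ \ P, (f i - f j) ^ 2 :=
          Finset.sum_nonneg fun _ _ => sq_nonneg _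
        simp only [hM, hm]
        linarith
      rw [hsplit (fun i => ∑ j, (f i - f j) ^ 2)]
      have h1 : ((n:ℝ) - 2) * (c / 2) ≤ ∑ i ∈ Finset.univ \ P, ∑ j, (f i - f j) ^ 2 := by
        calc ((n:ℝ) - 2) * (c / 2) = ∑ _i ∈ Finset.univ \ P, c / 2 := by
              rw [Finset.sum_const, nsmul_eq_mul, hcard]
          _ ≤ _ := Finset.sum_le_sum fun i _ => le_trans
              (hhalf (f i) (hlb i) (hub i)) (hrow i)
      have h2 : ((n:ℝ) - 2) * (c / 2) + 2 * c
          ≤ (∑ j, (f i₀ - f j) ^ 2) + ∑ j, (f j₀ - f j) ^ 2 := by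
        have e1 := hsplit (fun j => (f i₀ - f j) ^ 2)
        have e2 := hsplit (fun j => (f j₀ - f j) ^ 2)
        simp only [hM, hm] at e1 e2
        have h3 : ∑ j ∈ Finset.univ \ P, c / 2
            ≤ ∑ j ∈ Finset.univ \ P, ((M - f j) ^ 2 + (m - f j) ^ 2) := by
          refine Finset.sum_le_sum fun j _ => ?_
          have := hhalf (f j) (hlb j) (hub j)
          nlinarith [this]
        rw [Finset.sum_add_distrib] at h3
        rw [Finset.sum_const, nsmul_eq_mul, hcard] at h3
        have hsym : (m - M) ^ 2 = c := by rw [hc]; ring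
        simp only [hM, hm]
        rw [e1, e2]
        nlinarith [h3, hsym]
      have : (n:ℝ) * c = ((n:ℝ) - 2) * (c / 2) + (((n:ℝ) - 2) * (c / 2) + 2 * c) := by ring
      rw [this]
      exact add_le_add h1 h2
  have hn' : (0:ℝ) < n := by positivity
  linarith

/-- Theorem 2: improved upper bound for the energy of a graph with self-loops.
If `μ_max = max_i |λ_i − σ/n|` and `μ_min = min_i |λ_i − σ/n|`, then
`E(G_S) ≤ √( n(2m + σ − σ²/n) − (n/2)(μ_max − μ_min)² )`. -/
theorem stmt_1 (n : ℕ) (hn : 2 ≤ n) (G : SimpleGraph (Fin n)) [DecidableRel G.Adj]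
    (S : Finset (Fin n))
    (hA : Matrix.IsHermitian
      (SimpleGraph.adjMatrix ℝ G + Matrix.diagonal (fun i => if i ∈ S then (1 : ℝ) else 0)))
    (μmax μmin : ℝ)
    (hmax : IsGreatest (Set.range fun i => |hA.eigenvalues i - (S.card : ℝ) / n|) μmax)
    (hmin : IsLeast (Set.range fun i => |hA.eigenvalues i - (S.card : ℝ) / n|) μmin) :
    ∑ i, |hA.eigenvalues i - (S.card : ℝ) / n| ≤
      Real.sqrt ((n : ℝ) * (2 * (G.edgeFinset.card : ℝ) + (S.card : ℝ) - (S.card : ℝ) ^ 2 / n)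
        - (n : ℝ) / 2 * (μmax - μmin) ^ 2) := by
  classical
  set A : Matrix (Fin n) (Fin n) ℝ :=
    SimpleGraph.adjMatrix ℝ G + Matrix.diagonal (fun i => if i ∈ S then (1 : ℝ) else 0) with hAdef
  set σ : ℝ := (S.card : ℝ) with hσ
  set s : ℝ := σ / n with hs
  set f : Fin n → ℝ := fun i => |hA.eigenvalues i - s| with hf
  have hn0 : (0:ℝ) < n := by positivity
  -- trace A = σ
  have htr : A.trace = σ := by
    rw [hAdef, Matrix.trace_add, SimpleGraph.trace_adjMatrix, Matrix.trace_diagonal, zero_add, hσ]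
    simp
  -- trace (A*A) = 2m + σ
  have hdeg : ∀ i, ∑ j, G.adjMatrix ℝ i j = (G.degree i : ℝ) := by
    intro i
    simp [SimpleGraph.adjMatrix_apply, SimpleGraph.degree, SimpleGraph.neighborFinset_eq_filter,
      Finset.sum_boole]
  have hAij : ∀ i j, A i j * A j i
      = G.adjMatrix ℝ i j + Matrix.diagonal (fun i => if i ∈ S then (1 : ℝ) else 0) i j := by
    intro i j
    by_cases h : i = j
    · subst h
      simp only [hAdef, Matrix.add_apply, Matrix.diagonal_apply_eq,
        SimpleGraph.adjMatrix_apply, SimpleGraph.irrefl, if_false]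
      by_cases hS : i ∈ S <;> simp [hS]
    · simp only [hAdef, Matrix.add_apply, Matrix.diagonal_apply_ne _ h,
        Matrix.diagonal_apply_ne _ (Ne.symm h), SimpleGraph.adjMatrix_apply, add_zero]
      by_cases hadj : G.Adj i j
      · simp [hadj, hadj.symm]
      · simp [hadj, fun h' => hadj (G.adj_symm h')]
  have htr2 : (A * A).trace = 2 * (G.edgeFinset.card : ℝ) + σ := by
    have : (A * A).trace = ∑ i, ∑ j, A i j * A j i := by
      simp [Matrix.trace, Matrix.mul_apply, Matrix.diag]
    rw [this]
    simp only [hAij, Finset.sum_add_distrib]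
    have h1 : ∑ i, ∑ j, G.adjMatrix ℝ i j = 2 * (G.edgeFinset.card : ℝ) := by
      simp only [hdeg]
      calc ∑ i, (G.degree i : ℝ) = ((∑ i, G.degree i : ℕ) : ℝ) := by push_cast; ring
        _ = 2 * (G.edgeFinset.card : ℝ) := by
            rw [G.sum_degrees_eq_twice_card_edges]; push_cast; ring
    have h2 : ∑ i : Fin n, ∑ j : Fin n,
        Matrix.diagonal (fun i => if i ∈ S then (1 : ℝ) else 0) i j = σ := by
      have : ∀ i : Fin n, ∑ j : Fin n,
          Matrix.diagonal (fun i => if i ∈ S then (1 : ℝ) else 0) i j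
          = (if i ∈ S then (1:ℝ) else 0) := by
        intro i
        simp [Matrix.diagonal_apply]
      simp only [this, hσ]
      simp
    rw [h1, h2]
  -- eigenvalue sums
  have t1 : ∑ i, hA.eigenvalues i = σ := by
    rw [← my_trace_eq_sum_eigen A hA, htr]
  have t2 : ∑ i, hA.eigenvalues i ^ 2 = 2 * (G.edgeFinset.card : ℝ) + σ := by
    rw [← my_trace_sq_eq_sum_eigen_sq A hA, htr2]
  have T : ∑ i, f i ^ 2 = 2 * (G.edgeFinset.card : ℝ) + σ - σ ^ 2 / n := by
    have habs : ∀ i, f i ^ 2 = (hA.eigenvalues i - s) ^ 2 := fun i => sq_abs _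
    have hexp : ∀ i : Fin n, (hA.eigenvalues i - s) ^ 2
        = hA.eigenvalues i ^ 2 - 2 * s * hA.eigenvalues i + s ^ 2 := fun i => by ring
    simp only [habs, hexp, Finset.sum_add_distrib, Finset.sum_sub_distrib, ← Finset.mul_sum,
      Finset.sum_const, Finset.card_univ, Fintype.card_fin, nsmul_eq_mul, t1, t2]
    rw [hs]
    field_simp
    ring
  obtain ⟨i₀, hi₀⟩ := hmax.1
  obtain ⟨j₀, hj₀⟩ := hmin.1
  have hub : ∀ i, f i ≤ μmax := fun i => hmax.2 ⟨i, rfl⟩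
  have hlb : ∀ i, μmin ≤ f i := fun i => hmin.2 ⟨i, rfl⟩
  have hkey := key_ineq n hn f μmax μmin hub hlb i₀ j₀ hi₀ hj₀
  rw [T] at hkey
  exact Real.le_sqrt_of_sq_le hkey
end

section
/- For any n-tuple of real numbers d_1,…,d_n (n ≥ 1), we have n·∑_{i=1}^n d_i² − (∑_{i=1}^n d_i)² ≥ (n/2)·(max_i d_i − min_i d_i)². -/
/-- Key intermediate inequality: for any `n`-tuple of reals `d_1, …, d_n` (`n ≥ 1`),
`n·∑ d_i² − (∑ d_i)² ≥ (n/2)·(max_i d_i − min_i d_i)²`. -/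
theorem stmt_2 (n : ℕ) (hn : 1 ≤ n) (d : Fin n → ℝ) (M μ : ℝ)
    (hM : IsGreatest (Set.range d) M) (hμ : IsLeast (Set.range d) μ) :
    (n : ℝ) * ∑ i, (d i) ^ 2 - (∑ i, d i) ^ 2 ≥ (n : ℝ) / 2 * (M - μ) ^ 2 := by
  obtain ⟨a, ha⟩ := hM.1
  obtain ⟨b, hb⟩ := hμ.1
  have hn0 : (0:ℝ) < (n:ℝ) := by exact_mod_cast hn
  set m : ℝ := (∑ i, d i) / n with hm
  have hnm : (n:ℝ) * m = ∑ i, d i := by rw [hm]; field_simp [hn0.ne']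
  have hexp : ∑ i, (d i - m)^2 = ∑ i, (d i)^2 - 2*m*(∑ i, d i) + n * m^2 := by
    have h1 : ∀ i ∈ Finset.univ, (d i - m)^2 = (d i)^2 - 2*m*d i + m^2 := fun i _ => by ring
    rw [Finset.sum_congr rfl h1]
    simp [Finset.sum_add_distrib, Finset.sum_sub_distrib, ← Finset.mul_sum, Finset.card_univ]
    try ring
  have key : (n:ℝ) * ∑ i, (d i)^2 - (∑ i, d i)^2 = (n:ℝ) * ∑ i, (d i - m)^2 := by
    rw [hexp]
    linear_combination ((∑ i, d i) - (n:ℝ)*m) * hnm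
  by_cases hMμ : M = μ
  · have hz : (M - μ)^2 = 0 := by rw [hMμ]; ring
    rw [key, hz]
    have hs : 0 ≤ ∑ i, (d i - m)^2 := Finset.sum_nonneg fun i _ => sq_nonneg _
    nlinarith
  · have hab : a ≠ b := by rintro rfl; exact hMμ (ha.symm.trans hb)
    have hpair : ∑ i ∈ ({a,b} : Finset (Fin n)), (d i - m)^2
        = (d a - m)^2 + (d b - m)^2 := Finset.sum_pair hab
    have hle : (d a - m)^2 + (d b - m)^2 ≤ ∑ i, (d i - m)^2 := by
      rw [← hpair]
      exact Finset.sum_le_sum_of_subset_of_nonneg (Finset.subset_univ _)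
        (fun i _ _ => sq_nonneg _)
    have h2 : (M - μ)^2 / 2 ≤ (d a - m)^2 + (d b - m)^2 := by
      rw [ha, hb]
      nlinarith [sq_nonneg (M + μ - 2*m)]
    rw [key]
    have hfin : (M - μ)^2 / 2 ≤ ∑ i, (d i - m)^2 := h2.trans hle
    nlinarith [hfin, hn0]
end

section
/- Let G be a simple graph on n ≥ 1 vertices, S a subset of its vertices with |S| = σ, and suppose the self-loop graph G_S is connected (equivalently, G is connected). Let λ_1,…,λ_n be the adjacency eigenvalues of G_S. Then max_i |λ_i − σ/n| = min_i |λ_i − σ/n| if and only if n = 1, or n = 2 and the two vertices of G are adjacent; that is, if and only if G_S is one of: K_1 or K_2 (when σ = 0), K̂_1 or K̃_2 (when σ = 1), or K̂_2 (when σ = 2). -/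
theorem aux_spec {n : ℕ} (A : Matrix (Fin n) (Fin n) ℝ) (hA : A.IsHermitian) (c μ : ℝ)
    (h : ∀ i, (hA.eigenvalues i - c)^2 = μ^2) :
    (A - c • 1) * (A - c • 1) = μ^2 • (1 : Matrix (Fin n) (Fin n) ℝ) := by
  set U := (hA.eigenvectorUnitary : Matrix (Fin n) (Fin n) ℝ) with hUdef
  have hU1 : U * star U = 1 := Matrix.mem_unitaryGroup_iff.mp hA.eigenvectorUnitary.2
  have hU2 : star U * U = 1 := Matrix.mem_unitaryGroup_iff'.mp hA.eigenvectorUnitary.2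
  set D := Matrix.diagonal (fun i => hA.eigenvalues i - c) with hDdef
  have hD : Matrix.diagonal (RCLike.ofReal ∘ hA.eigenvalues) - c • (1 : Matrix (Fin n) (Fin n) ℝ)
      = D := by
    rw [Matrix.smul_one_eq_diagonal, Matrix.diagonal_sub, hDdef]
    congr 1
  have hM : A - c • 1 = U * D * star U := by
    conv_lhs => rw [hA.spectral_theorem, Unitary.conjStarAlgAut_apply, ← hUdef]
    rw [← hD, Matrix.mul_sub, Matrix.sub_mul]
    congr 1
    rw [Matrix.mul_smul, Matrix.mul_one, Matrix.smul_mul, hU1]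
  rw [hM]
  have h1 : (U * D * star U) * (U * D * star U) = U * (D * D) * star U := by
    calc (U * D * star U) * (U * D * star U) = U * D * (star U * U) * D * star U := by
          simp only [Matrix.mul_assoc]
      _ = U * (D * D) * star U := by rw [hU2]; simp only [Matrix.mul_one, Matrix.mul_assoc]
  have hf : (fun i => (hA.eigenvalues i - c) * (hA.eigenvalues i - c)) = fun _ : Fin n => μ^2 := by
    funext i; rw [← h i]; ring
  have h2 : D * D = μ^2 • (1 : Matrix (Fin n) (Fin n) ℝ) := by
    rw [hDdef, Matrix.diagonal_mul_diagonal, hf, Matrix.smul_one_eq_diagonal]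
  rw [h1, h2, Matrix.mul_smul, Matrix.smul_mul, Matrix.mul_one, hU1]

theorem aux_trace {n : ℕ} (A : Matrix (Fin n) (Fin n) ℝ) (hA : A.IsHermitian) :
    ∑ i, hA.eigenvalues i = A.trace := by
  set U := (hA.eigenvectorUnitary : Matrix (Fin n) (Fin n) ℝ) with hUdef
  have hU2 : star U * U = 1 := Matrix.mem_unitaryGroup_iff'.mp hA.eigenvectorUnitary.2
  conv_rhs => rw [hA.spectral_theorem, Unitary.conjStarAlgAut_apply, ← hUdef]
  rw [Matrix.trace_mul_comm, ← Matrix.mul_assoc, hU2, Matrix.one_mul, Matrix.trace_diagonal]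
  rfl

theorem walk_adj {V : Type*} {G : SimpleGraph V}
    (hno : ∀ u v, u ≠ v → ¬G.Adj u v → ∀ k, ¬(G.Adj u k ∧ G.Adj k v)) :
    ∀ {u v : V} (_ : G.Walk u v), u ≠ v → G.Adj u v := by
  intro u v p
  induction p with
  | nil => intro h; exact absurd rfl h
  | @cons a w b h p ih =>
    intro hab
    by_cases hwb : w = b
    · subst hwb; exact h
    · by_contra hnadj
      exact hno a b hab hnadj w ⟨h, ih hwb⟩


/-- Lemma 3: for a connected self-loop graph `G_S` on `n ≥ 1` vertices,
`max_i |λ_i − σ/n| = min_i |λ_i − σ/n|` if and only if `n = 1`, or `n = 2` and the two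
vertices of `G` are adjacent (i.e. `G_S` is `K_1`, `K_2`, `K̂_1`, `K̃_2` or `K̂_2`
according to the number of self-loops). -/
theorem stmt_3 (n : ℕ) (hn : 1 ≤ n) (G : SimpleGraph (Fin n)) [DecidableRel G.Adj]
    (hconn : G.Connected) (S : Finset (Fin n))
    (hA : Matrix.IsHermitian
      (SimpleGraph.adjMatrix ℝ G + Matrix.diagonal (fun i => if i ∈ S then (1 : ℝ) else 0)))
    (μmax μmin : ℝ)
    (hmax : IsGreatest (Set.range fun i => |hA.eigenvalues i - (S.card : ℝ) / n|) μmax)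
    (hmin : IsLeast (Set.range fun i => |hA.eigenvalues i - (S.card : ℝ) / n|) μmin) :
    μmax = μmin ↔ n = 1 ∨ (n = 2 ∧ ∀ u v : Fin n, u ≠ v → G.Adj u v) := by
  have hn0 : (n : ℝ) ≠ 0 := Nat.cast_ne_zero.mpr (by omega)
  set c : ℝ := (S.card : ℝ) / n with hc
  constructor
  · -- forward
    intro heq
    have hall : ∀ i, |hA.eigenvalues i - c| = μmax := by
      intro i
      refine le_antisymm (hmax.2 ⟨i, rfl⟩) ?_
      rw [heq]
      exact hmin.2 ⟨i, rfl⟩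
    have hsq : ∀ i, (hA.eigenvalues i - c)^2 = μmax^2 := by
      intro i; rw [← sq_abs, hall i]
    have hMM := aux_spec _ hA c μmax hsq
    -- entrywise identity for u ≠ v
    have key : ∀ u v : Fin n, u ≠ v →
        ((if u ∈ S then (1:ℝ) else 0) - c) * (if G.Adj u v then (1:ℝ) else 0)
        + (if G.Adj u v then (1:ℝ) else 0) * ((if v ∈ S then (1:ℝ) else 0) - c)
        + ∑ k ∈ ({u,v} : Finset (Fin n))ᶜ,
            (if G.Adj u k then (1:ℝ) else 0) * (if G.Adj k v then (1:ℝ) else 0) = 0 := by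
      intro u v huv
      have h0 : ((SimpleGraph.adjMatrix ℝ G
          + Matrix.diagonal (fun i => if i ∈ S then (1 : ℝ) else 0) - c • 1)
          * (SimpleGraph.adjMatrix ℝ G
          + Matrix.diagonal (fun i => if i ∈ S then (1 : ℝ) else 0) - c • 1)) u v
          = (μmax^2 • (1 : Matrix (Fin n) (Fin n) ℝ)) u v := by rw [hMM]
      rw [Matrix.smul_apply, Matrix.one_apply_ne huv, smul_zero, Matrix.mul_apply,
        ← Finset.sum_add_sum_compl ({u,v} : Finset (Fin n)), Finset.sum_pair huv] at h0
      have e1 : ∀ a b : Fin n, a ≠ b →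
          (SimpleGraph.adjMatrix ℝ G
            + Matrix.diagonal (fun i => if i ∈ S then (1 : ℝ) else 0) - c • 1) a b
          = (if G.Adj a b then (1:ℝ) else 0) := by
        intro a b hab
        simp [Matrix.sub_apply, Matrix.add_apply, Matrix.diagonal_apply_ne _ hab,
          Matrix.one_apply_ne hab]
      have e2 : ∀ a : Fin n,
          (SimpleGraph.adjMatrix ℝ G
            + Matrix.diagonal (fun i => if i ∈ S then (1 : ℝ) else 0) - c • 1) a a
          = (if a ∈ S then (1:ℝ) else 0) - c := by
        intro a
        simp [Matrix.sub_apply, Matrix.add_apply]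
      rw [e2 u, e2 v, e1 u v huv] at h0
      have hrest : ∑ k ∈ ({u,v} : Finset (Fin n))ᶜ,
          ((SimpleGraph.adjMatrix ℝ G
            + Matrix.diagonal (fun i => if i ∈ S then (1 : ℝ) else 0) - c • 1) u k *
           (SimpleGraph.adjMatrix ℝ G
            + Matrix.diagonal (fun i => if i ∈ S then (1 : ℝ) else 0) - c • 1) k v)
          = ∑ k ∈ ({u,v} : Finset (Fin n))ᶜ,
            (if G.Adj u k then (1:ℝ) else 0) * (if G.Adj k v then (1:ℝ) else 0) := by
        refine Finset.sum_congr rfl (fun k hk => ?_)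
        simp only [Finset.mem_compl, Finset.mem_insert, Finset.mem_singleton, not_or] at hk
        rw [e1 u k (Ne.symm hk.1), e1 k v hk.2]
      rw [hrest] at h0
      linarith [h0]
    -- completeness
    have hno : ∀ u v, u ≠ v → ¬G.Adj u v → ∀ k, ¬(G.Adj u k ∧ G.Adj k v) := by
      intro u v huv hnadj k hk
      have h0 := key u v huv
      rw [if_neg hnadj] at h0
      simp only [mul_zero, zero_mul, add_zero, zero_add] at h0
      have hku : k ≠ u := fun h => by subst h; exact G.irrefl hk.1
      have hkv : k ≠ v := fun h => by subst h; exact G.irrefl hk.2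
      have hkmem : k ∈ ({u,v} : Finset (Fin n))ᶜ := by
        simp [Finset.mem_compl, hku, hkv]
      have hpos : (1:ℝ) ≤ ∑ k ∈ ({u,v} : Finset (Fin n))ᶜ,
          (if G.Adj u k then (1:ℝ) else 0) * (if G.Adj k v then (1:ℝ) else 0) := by
        have h1 : (if G.Adj u k then (1:ℝ) else 0) * (if G.Adj k v then (1:ℝ) else 0) = 1 := by
          rw [if_pos hk.1, if_pos hk.2, one_mul]
        have hnonneg : ∀ x ∈ ({u,v} : Finset (Fin n))ᶜ,
            (0:ℝ) ≤ (if G.Adj u x then (1:ℝ) else 0) * (if G.Adj x v then (1:ℝ) else 0) := by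
          intro x _
          split_ifs <;> norm_num
        calc (1:ℝ) = _ := h1.symm
          _ ≤ _ := Finset.single_le_sum hnonneg hkmem
      linarith
    have hcomp : ∀ u v : Fin n, u ≠ v → G.Adj u v := by
      intro u v huv
      obtain ⟨p⟩ := hconn.preconnected u v
      exact walk_adj hno p huv
    by_cases hn1 : n = 1
    · exact Or.inl hn1
    by_cases hn2 : n = 2
    · exact Or.inr ⟨hn2, hcomp⟩
    -- n ≥ 3 : contradiction
    exfalso
    have hn3 : 3 ≤ n := by omega
    set u : Fin n := ⟨0, by omega⟩
    set v : Fin n := ⟨1, by omega⟩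
    have huv : u ≠ v := by simp [u, v, Fin.ext_iff]
    have h0 := key u v huv
    rw [if_pos (hcomp u v huv)] at h0
    have hrest : ∑ k ∈ ({u,v} : Finset (Fin n))ᶜ,
        (if G.Adj u k then (1:ℝ) else 0) * (if G.Adj k v then (1:ℝ) else 0)
        = (n : ℝ) - 2 := by
      have hconst : ∀ k ∈ ({u,v} : Finset (Fin n))ᶜ,
          (if G.Adj u k then (1:ℝ) else 0) * (if G.Adj k v then (1:ℝ) else 0) = 1 := by
        intro k hk
        simp only [Finset.mem_compl, Finset.mem_insert, Finset.mem_singleton, not_or] at hk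
        rw [if_pos (hcomp u k (Ne.symm hk.1)), if_pos (hcomp k v hk.2), one_mul]
      rw [Finset.sum_congr rfl hconst, Finset.sum_const, nsmul_eq_mul, mul_one,
        Finset.card_compl, Finset.card_pair huv, Fintype.card_fin]
      push_cast [Nat.cast_sub (by omega : 2 ≤ n)]
      ring
    rw [hrest] at h0
    set aN : ℕ := if u ∈ S then 1 else 0 with haN
    set bN : ℕ := if v ∈ S then 1 else 0 with hbN
    have haR : ((aN : ℝ)) = (if u ∈ S then (1:ℝ) else 0) := by
      rw [haN]; split_ifs <;> simp
    have hbR : ((bN : ℝ)) = (if v ∈ S then (1:ℝ) else 0) := by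
      rw [hbN]; split_ifs <;> simp
    rw [← haR, ← hbR] at h0
    have hreal : ((aN : ℝ) + bN) * n + n * n = 2 * S.card + 2 * n := by
      rw [hc] at h0
      field_simp at h0
      nlinarith [h0]
    have hnat : (aN + bN) * n + n * n = 2 * S.card + 2 * n := by exact_mod_cast hreal
    have hσ : S.card ≤ n := by
      have := Finset.card_le_univ S
      simpa using this
    have hab1 : aN ≤ 1 ∧ bN ≤ 1 := by constructor <;> [rw [haN]; rw [hbN]] <;> split_ifs <;> omega
    have h4 : n ≤ 4 := by nlinarith
    clear_value aN bN
    clear haR hbR h0 hrest huv key hMM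
    rcases Nat.lt_or_ge S.card n with hlt | hge
    · rcases (by omega : n = 3 ∨ n = 4) with h | h <;> subst h <;> omega
    · have hSeq : S = Finset.univ := by
        apply Finset.eq_univ_of_card
        rw [Fintype.card_fin]; omega
      have ha1 : aN = 1 := by rw [haN, if_pos (hSeq ▸ Finset.mem_univ u)]
      have hb1 : bN = 1 := by rw [hbN, if_pos (hSeq ▸ Finset.mem_univ v)]
      nlinarith
  · -- reverse
    rintro (hn1 | ⟨hn2, hadj⟩)
    · subst hn1
      obtain ⟨i, hi⟩ := hmax.1
      obtain ⟨j, hj⟩ := hmin.1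
      rw [← hi, ← hj, Subsingleton.elim i j]
    · subst hn2
      have htr := aux_trace _ hA
      have htrval : (SimpleGraph.adjMatrix ℝ G
          + Matrix.diagonal (fun i => if i ∈ S then (1 : ℝ) else 0)).trace = S.card := by
        rw [Matrix.trace_add, Matrix.trace_diagonal, SimpleGraph.trace_adjMatrix, zero_add]
        rw [Finset.sum_ite_mem, Finset.univ_inter, Finset.sum_const, nsmul_eq_mul, mul_one]
      rw [htrval, Fin.sum_univ_two] at htr
      have habs : |hA.eigenvalues 0 - c| = |hA.eigenvalues 1 - c| := by
        have : hA.eigenvalues 0 - c = -(hA.eigenvalues 1 - c) := by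
          rw [hc]; push_cast; linarith
        rw [this, abs_neg]
      obtain ⟨i, hi⟩ := hmax.1
      obtain ⟨j, hj⟩ := hmin.1
      have hsame : ∀ i j : Fin 2, |hA.eigenvalues i - c| = |hA.eigenvalues j - c| := by
        intro i j
        fin_cases i <;> fin_cases j <;> first | rfl | exact habs | exact habs.symm
      rw [← hi, ← hj]
      exact hsame i j
end

section
/- Let G_S be a graph with n ≥ 1 vertices, m edges and σ self-loops. Then E(G_S) = √( n(2m + σ − σ²/n) ) holds if and only if either (i) G has no edges and σ = 0, σ = n/2 or σ = n (i.e., G_S = nK_1, or G_S = (n/2)K_1 ∪ (n/2)K̂_1, or G_S = nK̂_1), or (ii) n is even, every vertex of G has degree exactly 1 (G is a perfect matching consisting of n/2 disjoint copies of K_2), and either σ = 0, σ = n, or every edge of G has exactly one endpoint in S (i.e., G_S = (n/2)K_2, or G_S = (n/2)K̂_2, or G_S = (n/2)K̃_2). -/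
open Matrix Finset SimpleGraph

section SpectralHelpers

variable {n : ℕ} (A : Matrix (Fin n) (Fin n) ℝ) (hA : A.IsHermitian)

private lemma spec_decomp :
    A = (hA.eigenvectorUnitary : Matrix (Fin n) (Fin n) ℝ) * diagonal hA.eigenvalues
      * star (hA.eigenvectorUnitary : Matrix (Fin n) (Fin n) ℝ) := by
  simpa [RCLike.ofReal_real_eq_id] using hA.spectral_theorem

private lemma myUnit : star (hA.eigenvectorUnitary : Matrix (Fin n) (Fin n) ℝ) *
    (hA.eigenvectorUnitary : Matrix (Fin n) (Fin n) ℝ) = 1 ∧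
    (hA.eigenvectorUnitary : Matrix (Fin n) (Fin n) ℝ) *
    star (hA.eigenvectorUnitary : Matrix (Fin n) (Fin n) ℝ) = 1 :=
  ⟨Unitary.coe_star_mul_self _, Unitary.coe_mul_star_self _⟩

private lemma trace_eq_sum_eig : A.trace = ∑ i, hA.eigenvalues i := by
  conv_lhs => rw [spec_decomp A hA]
  rw [Matrix.trace_mul_cycle, (myUnit A hA).1, Matrix.one_mul, Matrix.trace_diagonal]

private lemma trace_sq_eq : (A * A).trace = ∑ i, (hA.eigenvalues i) ^ 2 := by
  set U : Matrix (Fin n) (Fin n) ℝ := (hA.eigenvectorUnitary : Matrix (Fin n) (Fin n) ℝ)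
  conv_lhs => rw [spec_decomp A hA]
  rw [Matrix.mul_assoc, Matrix.mul_assoc, ← Matrix.mul_assoc (star U),
    ← Matrix.mul_assoc (star U), (myUnit A hA).1, Matrix.one_mul, ← Matrix.mul_assoc,
    ← Matrix.mul_assoc, Matrix.mul_assoc U, Matrix.diagonal_mul_diagonal,
    Matrix.trace_mul_cycle, (myUnit A hA).1, Matrix.one_mul, Matrix.trace_diagonal]
  exact Finset.sum_congr rfl fun i _ => (sq _).symm

private lemma shift_decomp (t : ℝ) :
    A - t • 1 = (hA.eigenvectorUnitary : Matrix (Fin n) (Fin n) ℝ) *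
      diagonal (fun i => hA.eigenvalues i - t)
      * star (hA.eigenvectorUnitary : Matrix (Fin n) (Fin n) ℝ) := by
  have h1 : diagonal (fun i => hA.eigenvalues i - t) = diagonal hA.eigenvalues - t • 1 := by
    ext i j
    by_cases hij : i = j
    · subst hij; simp [Matrix.diagonal_apply, Matrix.one_apply]
    · simp [Matrix.diagonal_apply, Matrix.one_apply, hij]
  rw [h1, Matrix.mul_sub, Matrix.sub_mul, ← spec_decomp A hA]
  congr 1
  rw [Matrix.mul_smul, Matrix.smul_mul, Matrix.mul_one, (myUnit A hA).2]

private lemma conj_eq (t c : ℝ) :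
    (A - t • 1) * (A - t • 1) = c • 1 ↔ ∀ i, (hA.eigenvalues i - t) ^ 2 = c := by
  set U : Matrix (Fin n) (Fin n) ℝ := (hA.eigenvectorUnitary : Matrix (Fin n) (Fin n) ℝ) with hU
  have key : ∀ D : Matrix (Fin n) (Fin n) ℝ, star U * (U * D * star U) * U = D := by
    intro D
    simp only [Matrix.mul_assoc, (myUnit A hA).1, Matrix.mul_one]
    rw [← Matrix.mul_assoc, (myUnit A hA).1, Matrix.one_mul]
    exact Matrix.mul_one D
  have hsq : (A - t • 1) * (A - t • 1) =
      U * diagonal (fun i => (hA.eigenvalues i - t) ^ 2) * star U := by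
    rw [shift_decomp A hA t, Matrix.mul_assoc, Matrix.mul_assoc, ← Matrix.mul_assoc (star U),
      ← Matrix.mul_assoc (star U), (myUnit A hA).1, Matrix.one_mul, ← Matrix.mul_assoc,
      ← Matrix.mul_assoc, Matrix.mul_assoc U, Matrix.diagonal_mul_diagonal]
    have h4 : (fun i => (hA.eigenvalues i - t) * (hA.eigenvalues i - t))
        = fun i => (hA.eigenvalues i - t) ^ 2 := funext fun i => (sq _).symm
    rw [h4]
  rw [hsq]
  constructor
  · intro h i
    have h3 := congrArg (fun M => star U * M * U) h
    rw [key] at h3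
    rw [Matrix.mul_smul, Matrix.smul_mul, Matrix.mul_one, (myUnit A hA).1] at h3
    have := congrFun (congrFun h3 i) i
    simpa using this
  · intro h
    have h2 : diagonal (fun i => (hA.eigenvalues i - t) ^ 2)
        = c • (1 : Matrix (Fin n) (Fin n) ℝ) := by
      ext i j
      by_cases hij : i = j
      · subst hij; simp [Matrix.diagonal_apply, Matrix.one_apply, h i]
      · simp [Matrix.diagonal_apply, Matrix.one_apply, hij]
    rw [h2, Matrix.mul_smul, Matrix.smul_mul, Matrix.mul_one, (myUnit A hA).2]

end SpectralHelpers

noncomputable def sfun {n : ℕ} (S : Finset (Fin n)) : Fin n → ℝ := fun i => if i ∈ S then 1 else 0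

section GraphHelpers

variable {n : ℕ} (G : SimpleGraph (Fin n)) [DecidableRel G.Adj] (S : Finset (Fin n))

lemma sfun_cases (i : Fin n) : sfun S i = 0 ∨ sfun S i = 1 := by
  unfold sfun; split <;> simp

lemma sfun_mem' {i : Fin n} : sfun S i = 1 ↔ i ∈ S := by
  unfold sfun; split <;> simp_all

lemma sum_sfun : ∑ i, sfun S i = S.card := by
  unfold sfun
  rw [Finset.sum_boole]
  simp

lemma trB : (G.adjMatrix ℝ + diagonal (sfun S)).trace = S.card := by
  rw [Matrix.trace_add, SimpleGraph.trace_adjMatrix, Matrix.trace_diagonal, zero_add, sum_sfun]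

lemma trB2 : ((G.adjMatrix ℝ + diagonal (sfun S)) * (G.adjMatrix ℝ + diagonal (sfun S))).trace
    = 2 * G.edgeFinset.card + S.card := by
  rw [Matrix.add_mul, Matrix.mul_add, Matrix.mul_add, Matrix.trace_add, Matrix.trace_add,
    Matrix.trace_add]
  have h1 : (G.adjMatrix ℝ * G.adjMatrix ℝ).trace = 2 * G.edgeFinset.card := by
    rw [Matrix.trace]
    simp only [Matrix.diag_apply, SimpleGraph.adjMatrix_mul_self_apply_self]
    rw [← Nat.cast_sum, SimpleGraph.sum_degrees_eq_twice_card_edges]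
    push_cast
    ring
  have h2 : (G.adjMatrix ℝ * diagonal (sfun S)).trace = 0 := by
    rw [Matrix.trace]
    simp [Matrix.diag_apply, Matrix.mul_diagonal]
  have h3 : (diagonal (sfun S) * G.adjMatrix ℝ).trace = 0 := by
    rw [Matrix.trace]
    apply Finset.sum_eq_zero
    intro i _
    rw [Matrix.diag_apply, Matrix.diagonal_mul]
    simp
  have h4 : (diagonal (sfun S) * diagonal (sfun S)).trace = S.card := by
    rw [Matrix.diagonal_mul_diagonal, Matrix.trace_diagonal, ← sum_sfun S]
    apply Finset.sum_congr rfl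
    intro i _
    unfold sfun
    split <;> simp
  rw [h1, h2, h3, h4]
  ring

lemma cs_eq (a : Fin n → ℝ) :
    (∑ i, a i) ^ 2 = n * ∑ i, (a i) ^ 2 ↔ ∀ i j, a i = a j := by
  have key : ∑ i, ∑ j, (a i - a j) ^ 2
      = 2 * ((n : ℝ) * ∑ i, (a i) ^ 2) - 2 * (∑ i, a i) ^ 2 := by
    simp only [sub_sq, Finset.sum_add_distrib, Finset.sum_sub_distrib, Finset.sum_const,
      Finset.card_univ, Fintype.card_fin, nsmul_eq_mul, ← Finset.sum_mul, ← Finset.mul_sum]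
    ring
  constructor
  · intro h i j
    have h0 : ∑ i, ∑ j, (a i - a j) ^ 2 = 0 := by rw [key, h]; ring
    have hnn : ∀ i ∈ (univ : Finset (Fin n)), (0:ℝ) ≤ ∑ j, (a i - a j) ^ 2 :=
      fun i _ => Finset.sum_nonneg fun j _ => sq_nonneg _
    have hi := (Finset.sum_eq_zero_iff_of_nonneg hnn).mp h0 i (mem_univ i)
    have hj := (Finset.sum_eq_zero_iff_of_nonneg
      (fun j _ => sq_nonneg (a i - a j))).mp hi j (mem_univ j)
    have := sq_eq_zero_iff.mp hj
    linarith
  · intro h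
    have h0 : ∑ i, ∑ j, (a i - a j) ^ 2 = 0 :=
      Finset.sum_eq_zero fun i _ => Finset.sum_eq_zero fun j _ => by rw [h i j]; ring
    rw [h0] at key
    linarith

lemma com_eq (i j : Fin n) :
    (G.adjMatrix ℝ * G.adjMatrix ℝ) i j
      = ((G.neighborFinset i ∩ G.neighborFinset j).card : ℝ) := by
  rw [SimpleGraph.adjMatrix_mul_apply]
  have : ∀ u ∈ G.neighborFinset i, G.adjMatrix ℝ u j = if u ∈ G.neighborFinset j then 1 else 0 := by
    intro u _
    simp [SimpleGraph.adjMatrix_apply, SimpleGraph.mem_neighborFinset, G.adj_comm u j]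
  rw [Finset.sum_congr rfl this, Finset.sum_boole, Finset.filter_mem_eq_inter]

lemma entry_char (t c : ℝ) :
    (G.adjMatrix ℝ + diagonal (sfun S) - t • 1) *
      (G.adjMatrix ℝ + diagonal (sfun S) - t • 1) = c • 1 ↔
    ((∀ i, (G.degree i : ℝ) + (sfun S i - t) ^ 2 = c) ∧
     ∀ i j, i ≠ j →
       ((G.neighborFinset i ∩ G.neighborFinset j).card : ℝ)
         + (sfun S i + sfun S j - 2 * t) * (G.adjMatrix ℝ) i j = 0) := by
  have hB : G.adjMatrix ℝ + diagonal (sfun S) - t • 1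
      = G.adjMatrix ℝ + diagonal (fun i => sfun S i - t) := by
    ext i j
    by_cases hij : i = j <;>
      simp [Matrix.add_apply, Matrix.sub_apply, Matrix.smul_apply, Matrix.diagonal_apply,
        Matrix.one_apply, hij]
  rw [hB]
  have hent : ∀ i j, ((G.adjMatrix ℝ + diagonal (fun i => sfun S i - t)) *
      (G.adjMatrix ℝ + diagonal (fun i => sfun S i - t))) i j
      = (G.adjMatrix ℝ * G.adjMatrix ℝ) i j
        + (sfun S i + sfun S j - 2 * t) * (G.adjMatrix ℝ) i j
        + (if i = j then (sfun S i - t) ^ 2 else 0) := by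
    intro i j
    rw [Matrix.add_mul, Matrix.mul_add, Matrix.mul_add, Matrix.add_apply, Matrix.add_apply,
      Matrix.add_apply, Matrix.mul_diagonal, Matrix.diagonal_mul, Matrix.diagonal_mul_diagonal,
      Matrix.diagonal_apply]
    split <;> ring
  rw [← Matrix.ext_iff]
  constructor
  · intro h
    constructor
    · intro i
      have := h i i
      rw [hent i i] at this
      simp only [if_pos rfl, Matrix.smul_apply, Matrix.one_apply_eq, smul_eq_mul, mul_one] at this
      rw [SimpleGraph.adjMatrix_mul_self_apply_self] at this
      simp only [SimpleGraph.adjMatrix_apply, G.irrefl, if_false, if_true, mul_zero,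
        add_zero] at this
      linarith [this]
    · intro i j hij
      have := h i j
      rw [hent i j, com_eq G i j] at this
      simp only [if_neg hij, Matrix.smul_apply, Matrix.one_apply_ne hij, smul_eq_mul,
        mul_zero, add_zero] at this
      linarith [this]
  · rintro ⟨h1, h2⟩ i j
    rw [hent i j]
    by_cases hij : i = j
    · subst hij
      simp only [if_pos rfl, Matrix.smul_apply, Matrix.one_apply_eq, smul_eq_mul, mul_one]
      rw [SimpleGraph.adjMatrix_mul_self_apply_self]
      simp only [SimpleGraph.adjMatrix_apply, G.irrefl, if_false, if_true, mul_zero, add_zero]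
      linarith [h1 i]
    · simp only [if_neg hij, Matrix.smul_apply, Matrix.one_apply_ne hij, smul_eq_mul,
        mul_zero, add_zero]
      rw [com_eq G i j]
      linarith [h2 i j hij]

end GraphHelpers
section MainHelpers
variable {n : ℕ} (G : SimpleGraph (Fin n)) [DecidableRel G.Adj] (S : Finset (Fin n))
-- matching gives 2σ = n under the alternating condition
lemma half_card (hdeg : ∀ v, G.degree v = 1)
    (hcond : ∀ u v : Fin n, G.Adj u v → (u ∈ S ↔ v ∉ S)) : 2 * S.card = n := by
  have hex : ∀ v, ∃ a, G.neighborFinset v = {a} := fun v => Finset.card_eq_one.mp (hdeg v)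
  choose f hf using hex
  have hadj : ∀ v, G.Adj v (f v) := fun v => by
    rw [← SimpleGraph.mem_neighborFinset, hf v]; exact Finset.mem_singleton_self _
  have huniq : ∀ v w, G.Adj v w → w = f v := fun v w h => by
    have : w ∈ G.neighborFinset v := (SimpleGraph.mem_neighborFinset _ _ _).mpr h
    rw [hf v, Finset.mem_singleton] at this; exact this
  have hinv : ∀ v, f (f v) = v := fun v => (huniq (f v) v (hadj v).symm).symm
  have hcard : S.card = Sᶜ.card := by
    apply Finset.card_bij' (fun a _ => f a) (fun a _ => f a)
    · intro a ha
      rw [Finset.mem_compl]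
      exact ((hcond a (f a) (hadj a)).mp ha)
    · intro a ha
      rw [Finset.mem_compl] at ha
      by_contra hfa
      exact ha ((hcond a (f a) (hadj a)).mpr hfa)
    · intro a _; exact hinv a
    · intro a _; exact hinv a
  rw [Finset.card_compl, Fintype.card_fin] at hcard
  have : S.card ≤ n := by
    simpa using Finset.card_le_card (Finset.subset_univ S)
  omega

theorem struct_iff (hn : 1 ≤ n) :
    (∃ c : ℝ, (∀ i, (G.degree i : ℝ) + (sfun S i - (S.card : ℝ) / n) ^ 2 = c) ∧
      ∀ i j : Fin n, i ≠ j →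
        ((G.neighborFinset i ∩ G.neighborFinset j).card : ℝ)
          + (sfun S i + sfun S j - 2 * ((S.card : ℝ) / n)) * (G.adjMatrix ℝ) i j = 0)
    ↔
    ((∀ u v : Fin n, ¬ G.Adj u v) ∧ (S.card = 0 ∨ 2 * S.card = n ∨ S.card = n)) ∨
    (Even n ∧ (∀ v : Fin n, G.degree v = 1) ∧
      (S.card = 0 ∨ S.card = n ∨ ∀ u v : Fin n, G.Adj u v → (u ∈ S ↔ v ∉ S))) := by
  have hn0 : (0 : ℝ) < n := by exact_mod_cast hn
  have hσn : S.card ≤ n := by simpa using Finset.card_le_card (Finset.subset_univ S)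
  set t : ℝ := (S.card : ℝ) / n with ht_def
  constructor
  · rintro ⟨c, P1, P2⟩
    -- transitivity via common neighbors
    have htrans : ∀ i j k : Fin n, i ≠ j → G.Adj k i → G.Adj k j → G.Adj i j := by
      intro i j k hij hki hkj
      by_contra hnadj
      have h := P2 i j hij
      have hA0 : G.adjMatrix ℝ i j = 0 := by simp [SimpleGraph.adjMatrix_apply, hnadj]
      rw [hA0, mul_zero, add_zero] at h
      have h0 : (G.neighborFinset i ∩ G.neighborFinset j).card = 0 := by exact_mod_cast h
      rw [Finset.card_eq_zero] at h0
      have : k ∈ G.neighborFinset i ∩ G.neighborFinset j := by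
        simp [SimpleGraph.mem_neighborFinset, hki.symm, hkj.symm]
      rw [h0] at this
      exact absurd this (Finset.notMem_empty k)
    have hedge : ∀ i j : Fin n, G.Adj i j →
        ((G.neighborFinset i ∩ G.neighborFinset j).card : ℝ) + sfun S i + sfun S j = 2 * t := by
      intro i j hij
      have h := P2 i j (G.ne_of_adj hij)
      rw [SimpleGraph.adjMatrix_apply, if_pos hij] at h
      linarith
    have hdeg_le : (∀ i j : Fin n, G.Adj i j →
          (G.neighborFinset i ∩ G.neighborFinset j).card = 0) → ∀ i, G.degree i ≤ 1 := by
      intro hcom i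
      by_contra hd
      push_neg at hd
      obtain ⟨a, ha, b, hb, hab⟩ := Finset.one_lt_card.mp hd
      rw [SimpleGraph.mem_neighborFinset] at ha hb
      have hadj : G.Adj a b := htrans a b i hab ha hb
      have h0 := hcom a b hadj
      rw [Finset.card_eq_zero] at h0
      have : i ∈ G.neighborFinset a ∩ G.neighborFinset b := by
        simp [SimpleGraph.mem_neighborFinset, ha.symm, hb.symm]
      rw [h0] at this
      exact absurd this (Finset.notMem_empty i)
    by_cases hE : ∀ u v : Fin n, ¬ G.Adj u v
    · -- no edges
      left
      refine ⟨hE, ?_⟩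
      have hdeg0 : ∀ i, G.degree i = 0 := by
        intro i
        rw [SimpleGraph.degree, Finset.card_eq_zero, Finset.eq_empty_iff_forall_notMem]
        intro x hx
        exact hE i x ((SimpleGraph.mem_neighborFinset _ _ _).mp hx)
      by_cases h0 : S.card = 0
      · exact Or.inl h0
      by_cases hNn : S.card = n
      · exact Or.inr (Or.inr hNn)
      refine Or.inr (Or.inl ?_)
      obtain ⟨i, hi⟩ := Finset.card_pos.mp (Nat.pos_of_ne_zero h0)
      have hj : ∃ j, j ∉ S := by
        by_contra hall
        push_neg at hall
        have : S = Finset.univ := Finset.eq_univ_iff_forall.mpr hall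
        rw [this, Finset.card_univ, Fintype.card_fin] at hNn
        exact hNn rfl
      obtain ⟨j, hj⟩ := hj
      have h1 := P1 i
      have h2 := P1 j
      rw [hdeg0 i] at h1
      rw [hdeg0 j] at h2
      have hsi : sfun S i = 1 := (sfun_mem' S).mpr hi
      have hsj : sfun S j = 0 := by
        rcases sfun_cases S j with h | h
        · exact h
        · exact absurd ((sfun_mem' S).mp h) hj
      rw [hsi] at h1
      rw [hsj] at h2
      push_cast at h1 h2
      have ht2 : 2 * t = 1 := by nlinarith
      have : 2 * (S.card : ℝ) = n := by
        rw [ht_def] at ht2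
        field_simp at ht2
        linarith
      exact_mod_cast this
    · -- there is an edge
      push_neg at hE
      obtain ⟨u, v, huv⟩ := hE
      right
      -- determine 2t ∈ {0,1,2}
      have hedgeuv := hedge u v huv
      have hNval : ∃ N : ℕ, (N : ℝ) = 2 * t := by
        refine ⟨(G.neighborFinset u ∩ G.neighborFinset v).card
          + (if u ∈ S then 1 else 0) + (if v ∈ S then 1 else 0), ?_⟩
        rw [← hedgeuv]
        push_cast
        unfold sfun
        split_ifs <;> push_cast <;> ring
      obtain ⟨N, hN⟩ := hNval
      have hNn' : N * n = 2 * S.card := by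
        have : (N : ℝ) * n = 2 * S.card := by
          rw [hN, ht_def]
          field_simp
        exact_mod_cast this
      have hNle : N ≤ 2 := by
        by_contra hN3
        push_neg at hN3
        have : 3 * n ≤ N * n := Nat.mul_le_mul_right n hN3
        omega
      have hσ3 : S.card = 0 ∨ 2 * S.card = n ∨ S.card = n := by
        interval_cases N <;> omega
      have hdegu_pos : 1 ≤ G.degree u := by
        rw [SimpleGraph.degree]
        exact Finset.card_pos.mpr ⟨v, (SimpleGraph.mem_neighborFinset _ _ _).mpr huv⟩
      have heven : (∀ w, G.degree w = 1) → Even n := by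
        intro hd
        have h2m := SimpleGraph.sum_degrees_eq_twice_card_edges G
        rw [Finset.sum_congr rfl (fun w _ => hd w)] at h2m
        simp only [Finset.sum_const, Finset.card_univ, Fintype.card_fin, smul_eq_mul,
          mul_one] at h2m
        exact ⟨G.edgeFinset.card, by omega⟩
      rcases hσ3 with h0 | h12 | hnn
      · -- σ = 0
        have hS : S = ∅ := Finset.card_eq_zero.mp h0
        have hs0 : ∀ i, sfun S i = 0 := by
          intro i; unfold sfun; rw [hS]; simp
        have ht0 : t = 0 := by rw [ht_def, h0]; simp
        have hcom0 : ∀ i j : Fin n, G.Adj i j →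
            (G.neighborFinset i ∩ G.neighborFinset j).card = 0 := by
          intro i j hij
          have h := hedge i j hij
          rw [hs0, hs0, ht0] at h
          have : ((G.neighborFinset i ∩ G.neighborFinset j).card : ℝ) = 0 := by linarith
          exact_mod_cast this
        have hdle := hdeg_le hcom0
        have hdeg1 : ∀ w, G.degree w = 1 := by
          intro w
          have h1 := P1 w
          have h2 := P1 u
          rw [hs0, ht0] at h1 h2
          have hdu : G.degree u = 1 := le_antisymm (hdle u) hdegu_pos
          rw [hdu] at h2
          have : (G.degree w : ℝ) = 1 := by push_cast at h1 h2 ⊢; linarith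
          exact_mod_cast this
        exact ⟨heven hdeg1, hdeg1, Or.inl h0⟩
      · -- 2σ = n
        have ht : t = 1 / 2 := by
          rw [ht_def]
          have : 2 * (S.card : ℝ) = n := by exact_mod_cast h12
          field_simp
          linarith
        have tri : ∀ x y z : Fin n, G.Adj x y → G.Adj z x → G.Adj z y →
            sfun S x = 0 ∧ sfun S y = 0 ∧
              (G.neighborFinset x ∩ G.neighborFinset y).card = 1 := by
          intro x y z hxy hzx hzy
          have h := hedge x y hxy
          rw [ht] at h
          norm_num at h
          have hz : z ∈ G.neighborFinset x ∩ G.neighborFinset y := by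
            simp [SimpleGraph.mem_neighborFinset, hzx.symm, hzy.symm]
          have hc1 : 1 ≤ (G.neighborFinset x ∩ G.neighborFinset y).card :=
            Finset.card_pos.mpr ⟨z, hz⟩
          have hcge : (1 : ℝ) ≤ ((G.neighborFinset x ∩ G.neighborFinset y).card : ℝ) := by
            exact_mod_cast hc1
          have hsx0 : sfun S x = 0 := by
            rcases sfun_cases S x with h' | h'
            · exact h'
            · rcases sfun_cases S y with h'' | h'' <;> (rw [h', h''] at h; linarith)
          have hsy0 : sfun S y = 0 := by
            rcases sfun_cases S y with h' | h'
            · exact h'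
            · rw [hsx0, h'] at h; linarith
          refine ⟨hsx0, hsy0, ?_⟩
          rw [hsx0, hsy0] at h
          have : ((G.neighborFinset x ∩ G.neighborFinset y).card : ℝ) = 1 := by linarith
          exact_mod_cast this
        have hnotri : ∀ i, G.degree i ≤ 1 := by
          intro i
          by_contra hd
          push_neg at hd
          obtain ⟨a, ha, b, hb, hab⟩ := Finset.one_lt_card.mp hd
          rw [SimpleGraph.mem_neighborFinset] at ha hb
          have hadj : G.Adj a b := htrans a b i hab ha hb
          obtain ⟨hsi0, hsa0, hcomia⟩ := tri i a b (ha) (hb.symm) (hadj.symm)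
          have hNi : G.neighborFinset i = {a, b} := by
            ext x
            simp only [SimpleGraph.mem_neighborFinset, Finset.mem_insert, Finset.mem_singleton]
            constructor
            · intro hix
              by_contra hne
              push_neg at hne
              have hxa : G.Adj x a := htrans x a i hne.1 hix ha
              have hx' : x ∈ G.neighborFinset i ∩ G.neighborFinset a := by
                simp [SimpleGraph.mem_neighborFinset, hix, hxa.symm]
              have hb' : b ∈ G.neighborFinset i ∩ G.neighborFinset a := by
                simp [SimpleGraph.mem_neighborFinset, hb, hadj]
              have : 1 < (G.neighborFinset i ∩ G.neighborFinset a).card :=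
                Finset.one_lt_card.mpr ⟨x, hx', b, hb', hne.2⟩
              omega
            · rintro (rfl | rfl)
              · exact ha
              · exact hb
          have hdi : G.degree i = 2 := by
            rw [SimpleGraph.degree, hNi, Finset.card_insert_of_notMem (by simpa using hab),
              Finset.card_singleton]
          have hc94 : c = 9 / 4 := by
            have h1 := P1 i
            rw [hdi, hsi0, ht] at h1
            push_cast at h1
            linarith
          have hσpos : 0 < S.card := by omega
          obtain ⟨z, hzS⟩ := Finset.card_pos.mp hσpos
          have hsz1 : sfun S z = 1 := (sfun_mem' S).mpr hzS
          have h1 := P1 z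
          rw [hsz1, ht, hc94] at h1
          have hdz : G.degree z = 2 := by
            have : (G.degree z : ℝ) = 2 := by push_cast at h1 ⊢; linarith
            exact_mod_cast this
          have hdz' : 1 < (G.neighborFinset z).card := by
            rw [SimpleGraph.degree] at hdz; omega
          obtain ⟨p, hp, q, hq, hpq⟩ := Finset.one_lt_card.mp hdz'
          rw [SimpleGraph.mem_neighborFinset] at hp hq
          have hpq' : G.Adj p q := htrans p q z hpq hp hq
          obtain ⟨hsz0, _, _⟩ := tri z p q hp hq.symm hpq'.symm
          rw [hsz1] at hsz0
          norm_num at hsz0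
        have hcom0 : ∀ i j : Fin n, i ≠ j →
            (G.neighborFinset i ∩ G.neighborFinset j).card = 0 := by
          intro i j hij
          by_contra hc
          obtain ⟨w, hw⟩ := Finset.card_pos.mp (Nat.pos_of_ne_zero hc)
          rw [Finset.mem_inter, SimpleGraph.mem_neighborFinset,
            SimpleGraph.mem_neighborFinset] at hw
          have hi' : i ∈ G.neighborFinset w := by
            simp [SimpleGraph.mem_neighborFinset, hw.1.symm]
          have hj' : j ∈ G.neighborFinset w := by
            simp [SimpleGraph.mem_neighborFinset, hw.2.symm]
          have : 1 < G.degree w := Finset.one_lt_card.mpr ⟨i, hi', j, hj', hij⟩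
          have := hnotri w
          omega
        have hsum1 : ∀ i j : Fin n, G.Adj i j → sfun S i + sfun S j = 1 := by
          intro i j hij
          have h := hedge i j hij
          rw [hcom0 i j (G.ne_of_adj hij), ht] at h
          push_cast at h
          linarith
        have hcondS : ∀ a b : Fin n, G.Adj a b → (a ∈ S ↔ b ∉ S) := by
          intro a b hab
          have h := hsum1 a b hab
          unfold sfun at h
          by_cases ha : a ∈ S <;> by_cases hb : b ∈ S <;>
            simp only [ha, hb, if_true, if_false] at h ⊢ <;> norm_num at h <;> tauto
        have hdeg1 : ∀ w, G.degree w = 1 := by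
          intro w
          have hdu : G.degree u = 1 := le_antisymm (hnotri u) hdegu_pos
          have hqu : (sfun S u - 1 / 2) ^ 2 = 1 / 4 := by
            rcases sfun_cases S u with h' | h' <;> rw [h'] <;> norm_num
          have hqw : (sfun S w - 1 / 2) ^ 2 = 1 / 4 := by
            rcases sfun_cases S w with h' | h' <;> rw [h'] <;> norm_num
          have h1 := P1 u
          have h2 := P1 w
          rw [hdu, ht, hqu] at h1
          rw [ht, hqw] at h2
          have : (G.degree w : ℝ) = 1 := by push_cast at h1 h2 ⊢; linarith
          exact_mod_cast this
        exact ⟨heven hdeg1, hdeg1, Or.inr (Or.inr hcondS)⟩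
      · -- σ = n
        have hS : S = Finset.univ := by
          apply Finset.eq_univ_of_card
          rw [hnn, Fintype.card_fin]
        have hs1 : ∀ i, sfun S i = 1 := by
          intro i; unfold sfun; rw [hS]; simp
        have ht1 : t = 1 := by
          rw [ht_def, hnn]
          field_simp
        have hcom0 : ∀ i j : Fin n, G.Adj i j →
            (G.neighborFinset i ∩ G.neighborFinset j).card = 0 := by
          intro i j hij
          have h := hedge i j hij
          rw [hs1, hs1, ht1] at h
          have : ((G.neighborFinset i ∩ G.neighborFinset j).card : ℝ) = 0 := by linarith
          exact_mod_cast this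
        have hdle := hdeg_le hcom0
        have hdeg1 : ∀ w, G.degree w = 1 := by
          intro w
          have h1 := P1 w
          have h2 := P1 u
          rw [hs1, ht1] at h1 h2
          have hdu : G.degree u = 1 := le_antisymm (hdle u) hdegu_pos
          rw [hdu] at h2
          have : (G.degree w : ℝ) = 1 := by push_cast at h1 h2 ⊢; linarith
          exact_mod_cast this
        exact ⟨heven hdeg1, hdeg1, Or.inr (Or.inl hnn)⟩
  · rintro (⟨hE, hσ⟩ | ⟨hEven, hdeg, hcond⟩)
    · -- no edges
      have hN : ∀ i : Fin n, G.neighborFinset i = ∅ := by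
        intro i
        rw [Finset.eq_empty_iff_forall_notMem]
        intro x hx
        exact hE i x ((SimpleGraph.mem_neighborFinset _ _ _).mp hx)
      have hdeg0 : ∀ i, G.degree i = 0 := by
        intro i; rw [SimpleGraph.degree, hN, Finset.card_empty]
      have hP2 : ∀ i j : Fin n, i ≠ j →
          ((G.neighborFinset i ∩ G.neighborFinset j).card : ℝ)
            + (sfun S i + sfun S j - 2 * t) * (G.adjMatrix ℝ) i j = 0 := by
        intro i j _
        rw [hN, Finset.empty_inter, Finset.card_empty]
        simp [SimpleGraph.adjMatrix_apply, hE i j]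
      rcases hσ with h0 | h12 | hnn
      · refine ⟨0, fun i => ?_, hP2⟩
        have hS : S = ∅ := Finset.card_eq_zero.mp h0
        have ht0 : t = 0 := by rw [ht_def, h0]; simp
        unfold sfun
        rw [hdeg0 i, hS, ht0]
        simp
      · refine ⟨1 / 4, fun i => ?_, hP2⟩
        have ht : t = 1 / 2 := by
          rw [ht_def]
          have : 2 * (S.card : ℝ) = n := by exact_mod_cast h12
          field_simp
          linarith
        rw [hdeg0 i, ht]
        rcases sfun_cases S i with h' | h' <;> rw [h'] <;> norm_num
      · refine ⟨0, fun i => ?_, hP2⟩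
        have hS : S = Finset.univ := by
          apply Finset.eq_univ_of_card
          rw [hnn, Fintype.card_fin]
        have ht1 : t = 1 := by rw [ht_def, hnn]; field_simp
        unfold sfun
        rw [hdeg0 i, hS, ht1]
        simp
    · -- perfect matching
      have hcom0 : ∀ i j : Fin n, i ≠ j →
          (G.neighborFinset i ∩ G.neighborFinset j).card = 0 := by
        intro i j hij
        by_contra hc
        obtain ⟨w, hw⟩ := Finset.card_pos.mp (Nat.pos_of_ne_zero hc)
        rw [Finset.mem_inter, SimpleGraph.mem_neighborFinset,
          SimpleGraph.mem_neighborFinset] at hw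
        have hi' : i ∈ G.neighborFinset w := by
          simp [SimpleGraph.mem_neighborFinset, hw.1.symm]
        have hj' : j ∈ G.neighborFinset w := by
          simp [SimpleGraph.mem_neighborFinset, hw.2.symm]
        have h2 : 1 < G.degree w := Finset.one_lt_card.mpr ⟨i, hi', j, hj', hij⟩
        have := hdeg w
        omega
      have hP2gen : ∀ (hfac : ∀ i j : Fin n, G.Adj i j → sfun S i + sfun S j - 2 * t = 0),
          ∀ i j : Fin n, i ≠ j →
          ((G.neighborFinset i ∩ G.neighborFinset j).card : ℝ)
            + (sfun S i + sfun S j - 2 * t) * (G.adjMatrix ℝ) i j = 0 := by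
        intro hfac i j hij
        rw [hcom0 i j hij]
        by_cases hadj : G.Adj i j
        · rw [hfac i j hadj]
          simp
        · simp [SimpleGraph.adjMatrix_apply, hadj]
      rcases hcond with h0 | hnn | hcnd
      · have hS : S = ∅ := Finset.card_eq_zero.mp h0
        have ht0 : t = 0 := by rw [ht_def, h0]; simp
        have hs0 : ∀ i, sfun S i = 0 := by
          intro i; unfold sfun; rw [hS]; simp
        refine ⟨1, fun i => ?_, hP2gen fun i j _ => by rw [hs0, hs0, ht0]; ring⟩
        rw [hdeg i, hs0, ht0]
        norm_num
      · have hS : S = Finset.univ := by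
          apply Finset.eq_univ_of_card
          rw [hnn, Fintype.card_fin]
        have ht1 : t = 1 := by rw [ht_def, hnn]; field_simp
        have hs1 : ∀ i, sfun S i = 1 := by
          intro i; unfold sfun; rw [hS]; simp
        refine ⟨1, fun i => ?_, hP2gen fun i j _ => by rw [hs1, hs1, ht1]; ring⟩
        rw [hdeg i, hs1, ht1]
        norm_num
      · have h12 := half_card G S hdeg hcnd
        have ht : t = 1 / 2 := by
          rw [ht_def]
          have : 2 * (S.card : ℝ) = n := by exact_mod_cast h12
          field_simp
          linarith
        have hsum1 : ∀ i j : Fin n, G.Adj i j → sfun S i + sfun S j = 1 := by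
          intro i j hij
          have h := hcnd i j hij
          unfold sfun
          by_cases ha : i ∈ S <;> by_cases hb : j ∈ S <;>
            simp only [ha, hb, if_true, if_false] <;> norm_num <;> tauto
        refine ⟨5 / 4, fun i => ?_, hP2gen fun i j hij => by rw [hsum1 i j hij, ht]; ring⟩
        rw [hdeg i, ht]
        rcases sfun_cases S i with h' | h' <;> rw [h'] <;> norm_num
end MainHelpers

/-- Theorem 4: characterization of equality in Gutmans' bound.
`E(G_S) = √( n(2m + σ − σ²/n) )` holds if and only if either
(i) `G` has no edges and `σ = 0`, `σ = n/2` or `σ = n`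
    (`G_S = nK_1`, `(n/2)K_1 ∪ (n/2)K̂_1` or `nK̂_1`), or
(ii) `n` is even, every vertex of `G` has degree exactly `1`, and either `σ = 0`, `σ = n`,
    or every edge of `G` has exactly one endpoint in `S`
    (`G_S = (n/2)K_2`, `(n/2)K̂_2` or `(n/2)K̃_2`). -/
theorem stmt_4 (n : ℕ) (hn : 1 ≤ n) (G : SimpleGraph (Fin n)) [DecidableRel G.Adj]
    (S : Finset (Fin n))
    (hA : Matrix.IsHermitian
      (SimpleGraph.adjMatrix ℝ G + Matrix.diagonal (fun i => if i ∈ S then (1 : ℝ) else 0))) :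
    (∑ i, |hA.eigenvalues i - (S.card : ℝ) / n|) =
      Real.sqrt ((n : ℝ) * (2 * (G.edgeFinset.card : ℝ) + (S.card : ℝ) - (S.card : ℝ) ^ 2 / n))
    ↔
    ((∀ u v : Fin n, ¬ G.Adj u v) ∧ (S.card = 0 ∨ 2 * S.card = n ∨ S.card = n)) ∨
    (Even n ∧ (∀ v : Fin n, G.degree v = 1) ∧
      (S.card = 0 ∨ S.card = n ∨ ∀ u v : Fin n, G.Adj u v → (u ∈ S ↔ v ∉ S))) := by
  have hn0 : (0 : ℝ) < n := by exact_mod_cast hn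
  set lam := hA.eigenvalues with hlam
  set t : ℝ := (S.card : ℝ) / n with ht_def
  set K : ℝ := 2 * (G.edgeFinset.card : ℝ) + (S.card : ℝ) - (S.card : ℝ) ^ 2 / n with hK_def
  have h1 : ∑ i, lam i = (S.card : ℝ) := by
    rw [hlam, ← trace_eq_sum_eig _ hA]
    exact trB G S
  have h2 : ∑ i, (lam i) ^ 2 = 2 * (G.edgeFinset.card : ℝ) + (S.card : ℝ) := by
    rw [hlam, ← trace_sq_eq _ hA]
    exact trB2 G S
  have hK : ∑ i, (lam i - t) ^ 2 = K := by
    have e1 : ∑ i, (lam i - t) ^ 2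
        = ∑ i, (lam i) ^ 2 - 2 * t * (∑ i, lam i) + n * t ^ 2 := by
      simp only [sub_sq, Finset.sum_add_distrib, Finset.sum_sub_distrib, Finset.sum_const,
        Finset.card_univ, Fintype.card_fin, nsmul_eq_mul, ← Finset.sum_mul, ← Finset.mul_sum]
      ring
    rw [e1, h1, h2, ht_def, hK_def]
    field_simp
    ring
  have i₀ : Fin n := ⟨0, hn⟩
  have main : (∑ i, |lam i - t|) = Real.sqrt ((n : ℝ) * K)
      ↔ ∃ c : ℝ, ∀ i, (lam i - t) ^ 2 = c := by
    constructor
    · intro h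
      have hnnK : (0 : ℝ) ≤ n * ∑ i, (lam i - t) ^ 2 :=
        mul_nonneg (le_of_lt hn0) (Finset.sum_nonneg fun i _ => sq_nonneg _)
      have hsq : (∑ i, |lam i - t|) ^ 2 = n * ∑ i, (|lam i - t|) ^ 2 := by
        calc (∑ i, |lam i - t|) ^ 2 = (Real.sqrt ((n : ℝ) * K)) ^ 2 := by rw [h]
          _ = (n : ℝ) * K := Real.sq_sqrt (by rw [← hK]; exact hnnK)
          _ = n * ∑ i, (lam i - t) ^ 2 := by rw [hK]
          _ = n * ∑ i, (|lam i - t|) ^ 2 := by simp only [sq_abs]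
      have hcs := (cs_eq (fun i => |lam i - t|)).mp hsq
      refine ⟨(lam i₀ - t) ^ 2, fun i => ?_⟩
      calc (lam i - t) ^ 2 = |lam i - t| ^ 2 := (sq_abs _).symm
        _ = |lam i₀ - t| ^ 2 := by rw [hcs i i₀]
        _ = (lam i₀ - t) ^ 2 := sq_abs _
    · rintro ⟨c, hc⟩
      have habs : ∀ i, |lam i - t| = Real.sqrt c := fun i => by
        rw [← hc i, Real.sqrt_sq_eq_abs]
      have hKc : K = n * c := by
        rw [← hK, Finset.sum_congr rfl fun i _ => hc i]
        simp [Finset.card_univ, mul_comm]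
      rw [Finset.sum_congr rfl fun i (_ : i ∈ Finset.univ) => habs i]
      rw [hKc, Finset.sum_const, Finset.card_univ, Fintype.card_fin, nsmul_eq_mul]
      rw [show (n : ℝ) * ((n : ℝ) * c) = ((n : ℝ) * (n : ℝ)) * c by ring,
        Real.sqrt_mul (mul_nonneg (le_of_lt hn0) (le_of_lt hn0)),
        Real.sqrt_mul_self (le_of_lt hn0)]
  refine main.trans ?_
  have step2 : (∃ c : ℝ, ∀ i, (lam i - t) ^ 2 = c)
      ↔ ∃ c : ℝ, (∀ i, (G.degree i : ℝ) + (sfun S i - t) ^ 2 = c) ∧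
        ∀ i j : Fin n, i ≠ j →
          ((G.neighborFinset i ∩ G.neighborFinset j).card : ℝ)
            + (sfun S i + sfun S j - 2 * t) * (G.adjMatrix ℝ) i j = 0 := by
    apply exists_congr
    intro c
    exact (conj_eq _ hA t c).symm.trans (entry_char G S t c)
  exact step2.trans (struct_iff G S hn)
end

section
/- Let G_S be a graph with n ≥ 1 vertices, m edges and σ self-loops. Then E(G_S) ≤ √( n(2m + σ − σ²/n) ). -/
open Matrix Finset

variable {n : Type*} [Fintype n] [DecidableEq n]

lemma myTrace_eq (A : Matrix n n ℝ) (hA : A.IsHermitian) :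
    A.trace = ∑ i, hA.eigenvalues i := by
  conv_lhs => rw [hA.spectral_theorem, Unitary.conjStarAlgAut_apply]
  rw [Matrix.trace_mul_cycle,
    (Matrix.mem_unitaryGroup_iff').mp hA.eigenvectorUnitary.2, Matrix.one_mul,
    Matrix.trace_diagonal]
  simp

lemma myTraceSq_eq (A : Matrix n n ℝ) (hA : A.IsHermitian) :
    (A * A).trace = ∑ i, hA.eigenvalues i ^ 2 := by
  conv_lhs => rw [hA.spectral_theorem, Unitary.conjStarAlgAut_apply]
  set U : Matrix n n ℝ := (hA.eigenvectorUnitary : Matrix n n ℝ) with hU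
  set D : Matrix n n ℝ := diagonal (RCLike.ofReal ∘ hA.eigenvalues) with hD
  have h1 : star U * U = 1 := (Matrix.mem_unitaryGroup_iff').mp hA.eigenvectorUnitary.2
  rw [Matrix.trace_mul_cycle, Matrix.trace_mul_cycle]
  rw [show star U * (U * D * star U) * (U * D) = (star U * U) * D * ((star U * U) * D) from by
    noncomm_ring]
  rw [h1, Matrix.one_mul, hD, Matrix.diagonal_mul_diagonal, Matrix.trace_diagonal]
  simp [sq]

/-- Gutmans' bound: `E(G_S) ≤ √( n(2m + σ − σ²/n) )`. -/
theorem stmt_5 (n : ℕ) (hn : 1 ≤ n) (G : SimpleGraph (Fin n)) [DecidableRel G.Adj]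
    (S : Finset (Fin n))
    (hA : Matrix.IsHermitian
      (SimpleGraph.adjMatrix ℝ G + Matrix.diagonal (fun i => if i ∈ S then (1 : ℝ) else 0))) :
    ∑ i, |hA.eigenvalues i - (S.card : ℝ) / n| ≤
      Real.sqrt ((n : ℝ) * (2 * (G.edgeFinset.card : ℝ) + (S.card : ℝ) - (S.card : ℝ) ^ 2 / n)) := by
  have hn0 : (0:ℝ) < n := by exact_mod_cast hn
  have hsumf : ∑ i, (if i ∈ S then (1:ℝ) else 0) = S.card := by simp
  have htr : ∑ i, hA.eigenvalues i = S.card := by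
    rw [← myTrace_eq _ hA, Matrix.trace_add, Matrix.trace_diagonal,
      SimpleGraph.trace_adjMatrix, zero_add, hsumf]
  have htr2 : ∑ i, hA.eigenvalues i ^ 2 = 2 * G.edgeFinset.card + S.card := by
    rw [← myTraceSq_eq _ hA]
    set D : Matrix (Fin n) (Fin n) ℝ :=
      Matrix.diagonal (fun i => if i ∈ S then (1 : ℝ) else 0) with hD
    have hexp : (SimpleGraph.adjMatrix ℝ G + D) * (SimpleGraph.adjMatrix ℝ G + D) =
        SimpleGraph.adjMatrix ℝ G * SimpleGraph.adjMatrix ℝ G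
        + SimpleGraph.adjMatrix ℝ G * D + D * SimpleGraph.adjMatrix ℝ G + D * D := by
      noncomm_ring
    rw [hexp, Matrix.trace_add, Matrix.trace_add, Matrix.trace_add]
    have t1 : (SimpleGraph.adjMatrix ℝ G * SimpleGraph.adjMatrix ℝ G).trace
        = 2 * G.edgeFinset.card := by
      rw [Matrix.trace]
      have h : ∀ i, (SimpleGraph.adjMatrix ℝ G * SimpleGraph.adjMatrix ℝ G).diag i
          = (G.degree i : ℝ) := fun i => by
        simp [Matrix.diag, SimpleGraph.adjMatrix_mul_self_apply_self,
          Finset.filter_true_of_mem]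
      rw [Finset.sum_congr rfl (fun i _ => h i), ← Nat.cast_sum,
        SimpleGraph.sum_degrees_eq_twice_card_edges]
      push_cast; ring
    have t2 : (SimpleGraph.adjMatrix ℝ G * D).trace = 0 := by
      rw [Matrix.trace]
      apply Finset.sum_eq_zero
      intro i _
      simp [Matrix.diag, hD, Matrix.mul_diagonal]
    have t3 : (D * SimpleGraph.adjMatrix ℝ G).trace = 0 := by
      rw [Matrix.trace]
      apply Finset.sum_eq_zero
      intro i _
      simp only [Matrix.diag, hD, Matrix.diagonal_mul]
      simp
    have t4 : (D * D).trace = S.card := by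
      rw [hD, Matrix.diagonal_mul_diagonal, Matrix.trace_diagonal]
      simp [ite_and]
    rw [t1, t2, t3, t4]; ring
  set c : ℝ := (S.card : ℝ) / n with hc
  have hvar : ∑ i, (hA.eigenvalues i - c) ^ 2
      = 2 * G.edgeFinset.card + S.card - (S.card : ℝ) ^ 2 / n := by
    have h : ∀ i, (hA.eigenvalues i - c) ^ 2
        = hA.eigenvalues i ^ 2 - 2 * c * hA.eigenvalues i + c ^ 2 := fun i => by ring
    rw [Finset.sum_congr rfl (fun i _ => h i), Finset.sum_add_distrib,
      Finset.sum_sub_distrib, ← Finset.mul_sum, htr2, htr, Finset.sum_const,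
      Finset.card_univ, Fintype.card_fin, nsmul_eq_mul, hc]
    field_simp
    ring
  have hy : (0:ℝ) ≤ (n : ℝ) * (2 * (G.edgeFinset.card : ℝ) + (S.card : ℝ)
      - (S.card : ℝ) ^ 2 / n) := by
    rw [← hvar]; positivity
  apply (Real.le_sqrt (Finset.sum_nonneg fun i _ => abs_nonneg _) hy).mpr
  calc (∑ i, |hA.eigenvalues i - c|) ^ 2
      = (∑ i, (1:ℝ) * |hA.eigenvalues i - c|) ^ 2 := by simp
    _ ≤ (∑ _i : Fin n, (1:ℝ) ^ 2) * ∑ i, |hA.eigenvalues i - c| ^ 2 :=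
        Finset.sum_mul_sq_le_sq_mul_sq _ _ _
    _ = (n : ℝ) * ∑ i, (hA.eigenvalues i - c) ^ 2 := by simp [sq_abs]
    _ = (n : ℝ) * (2 * G.edgeFinset.card + S.card - (S.card : ℝ) ^ 2 / n) := by rw [hvar]
end

section
/- Let G_S be a graph with n ≥ 1 vertices, m edges and σ self-loops, and let λ_1 be the largest adjacency eigenvalue of G_S. Then λ_1 = √(2m + σ) if and only if G_S = K̂_σ ∪ (n − σ)K_1, i.e., two distinct vertices u, v are adjacent in G if and only if both u ∈ S and v ∈ S (the loop vertices form a clique and all other vertices are isolated). -/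
open Finset in
lemma trace_helper {n : ℕ} (A : Matrix (Fin n) (Fin n) ℝ) (hA : A.IsHermitian) :
    A.trace = ∑ i, hA.eigenvalues i ∧ (A*A).trace = ∑ i, (hA.eigenvalues i)^2 := by
  set V := (hA.eigenvectorUnitary : Matrix (Fin n) (Fin n) ℝ) with hV
  have hVV : star V * V = 1 := by
    rw [hV]; exact_mod_cast Unitary.coe_star_mul_self hA.eigenvectorUnitary
  set D := Matrix.diagonal ((RCLike.ofReal ∘ hA.eigenvalues : Fin n → ℝ)) with hD
  have hsp : A = V * D * star V := hA.spectral_theorem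
  constructor
  · calc A.trace = (V * D * star V).trace := by rw [← hsp]
      _ = ∑ i, hA.eigenvalues i := by
          rw [Matrix.trace_mul_cycle, hVV, one_mul, hD]
          simp [Matrix.trace_diagonal]
  · have h2 : A * A = V * (D * D) * star V := by
      rw [hsp]
      calc V * D * star V * (V * D * star V) = V * (D * (star V * V) * D) * star V := by
            noncomm_ring
        _ = V * (D * D) * star V := by rw [hVV]; noncomm_ring
    calc (A*A).trace = (V * (D*D) * star V).trace := by rw [← h2]
      _ = ∑ i, (hA.eigenvalues i)^2 := by
          rw [Matrix.trace_mul_cycle, hVV, one_mul, hD]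
          simp [Matrix.diagonal_mul_diagonal, Matrix.trace_diagonal, pow_two]

lemma sq_helper {n : ℕ} (A : Matrix (Fin n) (Fin n) ℝ) (hA : A.IsHermitian) (c : ℝ)
    (h : ∀ i, hA.eigenvalues i ^ 2 = c * hA.eigenvalues i) : A * A = c • A := by
  set V := (hA.eigenvectorUnitary : Matrix (Fin n) (Fin n) ℝ) with hV
  have hVV : star V * V = 1 := by
    rw [hV]; exact_mod_cast Unitary.coe_star_mul_self hA.eigenvectorUnitary
  set D := Matrix.diagonal ((RCLike.ofReal ∘ hA.eigenvalues : Fin n → ℝ)) with hD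
  have hsp : A = V * D * star V := hA.spectral_theorem
  have h2 : A * A = V * (D * D) * star V := by
    rw [hsp]
    calc V * D * star V * (V * D * star V) = V * (D * (star V * V) * D) * star V := by
          noncomm_ring
      _ = V * (D * D) * star V := by rw [hVV]; noncomm_ring
  have hDD : D * D = c • D := by
    rw [hD, Matrix.diagonal_mul_diagonal]
    ext i j
    rcases eq_or_ne i j with rfl | hij
    · simp only [Matrix.diagonal_apply_eq, Matrix.smul_apply, Function.comp_apply, smul_eq_mul]
      have := h i; rw [pow_two] at this; simpa using this
    · simp [Matrix.diagonal_apply_ne _ hij]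
  rw [h2, hDD]
  rw [Matrix.mul_smul, Matrix.smul_mul, ← hsp]

section
variable {n : ℕ} (G : SimpleGraph (Fin n)) [DecidableRel G.Adj] (S : Finset (Fin n))

open Finset in
theorem main_aux (hn : 1 ≤ n)
    (hA : Matrix.IsHermitian
      (SimpleGraph.adjMatrix ℝ G + Matrix.diagonal (fun i => if i ∈ S then (1 : ℝ) else 0)))
    (l1 : ℝ) (hl1 : IsGreatest (Set.range hA.eigenvalues) l1) :
    l1 = Real.sqrt (2 * (G.edgeFinset.card : ℝ) + (S.card : ℝ)) ↔
      ∀ u v : Fin n, u ≠ v → (G.Adj u v ↔ (u ∈ S ∧ v ∈ S)) := by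
  classical
  set f : Fin n → ℝ := fun i => if i ∈ S then 1 else 0 with hf
  set A := SimpleGraph.adjMatrix ℝ G + Matrix.diagonal f with hAdef
  set lam := hA.eigenvalues with hlam
  have hentry : ∀ i j, A i j = if i = j then f i else (if G.Adj i j then 1 else 0) := by
    intro i j
    rcases eq_or_ne i j with rfl | hij
    · simp [hAdef, Matrix.add_apply, Matrix.diagonal_apply_eq]
    · simp [hAdef, Matrix.add_apply, Matrix.diagonal_apply_ne _ hij, hij]
  have hsym : ∀ i j, A j i = A i j := by
    intro i j
    rw [hentry, hentry]
    rcases eq_or_ne i j with rfl | hij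
    · rfl
    · rw [if_neg hij.symm, if_neg hij]
      by_cases h : G.Adj i j
      · rw [if_pos h, if_pos h.symm]
      · rw [if_neg h, if_neg (fun h' => h h'.symm)]
  have h01 : ∀ i j, A i j = 0 ∨ A i j = 1 := by
    intro i j; rw [hentry]
    by_cases h1 : i = j
    · rw [if_pos h1, hf]; by_cases h2 : i ∈ S <;> simp [h2]
    · rw [if_neg h1]; by_cases h2 : G.Adj i j <;> simp [h2]
  have hnn : ∀ i j, (0:ℝ) ≤ A i j := by
    intro i j; rcases h01 i j with h | h <;> rw [h] <;> norm_num
  have hle1 : ∀ i j, A i j ≤ 1 := by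
    intro i j; rcases h01 i j with h | h <;> rw [h] <;> norm_num
  have hidem : ∀ i j, A i j * A i j = A i j := by
    intro i j; rcases h01 i j with h | h <;> rw [h] <;> ring
  have hdiag : ∀ i, A i i = f i := by intro i; rw [hentry, if_pos rfl]
  have hAA : ∀ i, (A*A) i i = ∑ j, A i j := by
    intro i
    rw [Matrix.mul_apply]
    exact Finset.sum_congr rfl fun j _ => by rw [hsym i j, hidem]
  have hfsum : ∑ i, f i = (S.card : ℝ) := by
    rw [hf]; simp [Finset.sum_ite_mem, Finset.univ_inter]
  -- total sum of entries of A
  have hsum2 : ∑ i, ∑ j, A i j = 2*(G.edgeFinset.card:ℝ) + (S.card:ℝ) := by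
    have hrow : ∀ i, ∑ j, A i j = (G.degree i : ℝ) + f i := by
      intro i
      have : ∀ j, A i j = (if G.Adj i j then (1:ℝ) else 0) + (if j = i then f i else 0) := by
        intro j
        rcases eq_or_ne i j with rfl | hij
        · simp [hentry, G.irrefl]
        · simp [hentry, hij, hij.symm]
      simp only [this, Finset.sum_add_distrib]
      congr 1
      · rw [Finset.sum_boole]
        congr 1
        rw [← SimpleGraph.neighborFinset_eq_filter, SimpleGraph.degree]
      · simp
    simp only [hrow, Finset.sum_add_distrib, hfsum]
    congr 1
    rw [← Nat.cast_sum]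
    rw [show ∑ i, G.degree i = 2 * G.edgeFinset.card from G.sum_degrees_eq_twice_card_edges]
    push_cast; ring
  obtain ⟨htr1, htr2⟩ := trace_helper A hA
  have htrace : ∑ i, A i i = A.trace := by simp [Matrix.trace, Matrix.diag]
  have htrace2 : ∑ i, (A*A) i i = (A*A).trace := by simp [Matrix.trace, Matrix.diag]
  have hsumlam : ∑ i, lam i = (S.card : ℝ) := by
    rw [hlam, ← htr1, ← htrace]
    calc ∑ i, A i i = ∑ i, f i := by exact Finset.sum_congr rfl fun i _ => hdiag i
      _ = (S.card : ℝ) := hfsum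
  have hsumlam2 : ∑ i, (lam i)^2 = 2*(G.edgeFinset.card:ℝ) + (S.card:ℝ) := by
    rw [hlam, ← htr2, ← htrace2, ← hsum2]
    exact Finset.sum_congr rfl fun i _ => hAA i
  obtain ⟨i0, hi0⟩ := hl1.1
  have hub : ∀ i, lam i ≤ l1 := fun i => hl1.2 ⟨i, rfl⟩
  have hnonneg : (0:ℝ) ≤ 2*(G.edgeFinset.card:ℝ) + (S.card:ℝ) := by positivity
  constructor
  · intro heq
    have hl1sq : l1^2 = 2*(G.edgeFinset.card:ℝ) + (S.card:ℝ) := by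
      rw [heq, Real.sq_sqrt hnonneg]
    have hzero : ∀ i, i ≠ i0 → lam i = 0 := by
      have hrest : ∑ i ∈ Finset.univ.erase i0, (lam i)^2 = 0 := by
        have hsplit := Finset.add_sum_erase Finset.univ (fun i => (lam i)^2) (Finset.mem_univ i0)
        have hl : (lam i0)^2 = l1^2 := by rw [hi0]
        linarith [hsumlam2]
      intro i hi
      have := (Finset.sum_eq_zero_iff_of_nonneg (fun j _ => sq_nonneg (lam j))).1 hrest i
        (Finset.mem_erase.2 ⟨hi, Finset.mem_univ i⟩)
      exact pow_eq_zero_iff (by norm_num) |>.1 this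
    have hquad : ∀ i, lam i ^ 2 = l1 * lam i := by
      intro i
      by_cases h : i = i0
      · subst h; rw [hi0]; ring
      · rw [hzero i h]; ring
    have hA2 : A * A = l1 • A := sq_helper A hA l1 hquad
    have hrowsq : ∀ u, ∑ j, A u j = l1 * f u := by
      intro u
      have h1 : (A*A) u u = l1 * A u u := by rw [hA2]; simp
      rw [hAA u, hdiag u] at h1
      exact h1
    have hrow0 : ∀ u, u ∉ S → ∀ v, A u v = 0 := by
      intro u hu v
      have hfu : f u = 0 := by rw [hf]; simp [hu]
      have h2 : ∑ j, A u j * A u j = 0 := by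
        have h1 : (A*A) u u = l1 * A u u := by rw [hA2]; simp
        rw [Matrix.mul_apply] at h1
        rw [hdiag u, hfu, mul_zero] at h1
        rw [← h1]
        exact Finset.sum_congr rfl fun j _ => by rw [hsym u j]
      have := (Finset.sum_eq_zero_iff_of_nonneg (fun j _ => mul_self_nonneg (A u j))).1 h2 v
        (Finset.mem_univ v)
      exact mul_self_eq_zero.1 this
    have hadjS : ∀ u v, G.Adj u v → u ∈ S := by
      intro u v h
      by_contra hu
      have h0 := hrow0 u hu v
      rw [hentry, if_neg (G.ne_of_adj h), if_pos h] at h0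
      norm_num at h0
    rcases eq_or_lt_of_le hnonneg with h0 | hpos
    · have hc1 : (0:ℝ) ≤ (G.edgeFinset.card:ℝ) := Nat.cast_nonneg _
      have hc2 : (0:ℝ) ≤ (S.card:ℝ) := Nat.cast_nonneg _
      have hm1 : G.edgeFinset.card = 0 := by
        have : (G.edgeFinset.card:ℝ) = 0 := by linarith
        exact_mod_cast this
      have hm2 : S.card = 0 := by
        have : (S.card:ℝ) = 0 := by linarith
        exact_mod_cast this
      have hm : G.edgeFinset.card = 0 ∧ S.card = 0 := ⟨hm1, hm2⟩
      intro u v huv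
      constructor
      · intro hadj
        have hne : G.edgeFinset.Nonempty :=
          ⟨s(u, v), by simp [SimpleGraph.mem_edgeFinset, hadj]⟩
        exact absurd hm1 hne.card_ne_zero
      · rintro ⟨hu, -⟩
        have hSe : S = ∅ := Finset.card_eq_zero.1 hm2
        rw [hSe] at hu
        exact absurd hu (Finset.notMem_empty _)
    · have hl1pos : 0 < l1 := by rw [heq]; exact Real.sqrt_pos.2 hpos
      have htot : l1 * l1 = (S.card : ℝ) * l1 := by
        have h1 : ∑ u, ∑ v, A u v = (S.card:ℝ) * l1 := by
          calc ∑ u, ∑ v, A u v = ∑ u, l1 * f u := Finset.sum_congr rfl fun u _ => hrowsq u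
            _ = l1 * ∑ u, f u := by rw [Finset.mul_sum]
            _ = (S.card:ℝ) * l1 := by rw [hfsum]; ring
        nlinarith [hsum2, hl1sq]
      have hl1σ : l1 = (S.card : ℝ) := by
        have := mul_right_cancel₀ (ne_of_gt hl1pos) htot
        linarith
      intro u v huv
      constructor
      · intro hadj; exact ⟨hadjS u v hadj, hadjS v u hadj.symm⟩
      · rintro ⟨hu, hv⟩
        by_contra hadj
        have hAuv : A u v = 0 := by rw [hentry, if_neg huv, if_neg hadj]
        have hS : ∑ j ∈ S, A u j = (S.card : ℝ) := by
          have h1 := hrowsq u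
          rw [hl1σ] at h1
          have hfu : f u = 1 := by rw [hf]; simp [hu]
          rw [hfu, mul_one] at h1
          rw [← h1]
          exact Finset.sum_subset S.subset_univ fun x _ hx => by
            rw [← hsym u x]; exact hrow0 x hx u
        have hlt : ∑ j ∈ S, A u j < ∑ j ∈ S, (1:ℝ) :=
          Finset.sum_lt_sum (fun j _ => hle1 u j) ⟨v, hv, by rw [hAuv]; norm_num⟩
        rw [hS, Finset.sum_const, nsmul_eq_mul, mul_one] at hlt
        exact lt_irrefl _ hlt
  · intro hcond
    have hstruct : ∀ u v, A u v = f u * f v := by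
      intro u v
      rw [hentry]
      rcases eq_or_ne u v with rfl | huv
      · rw [if_pos rfl, hf]; by_cases h : u ∈ S <;> simp [h]
      · rw [if_neg huv, hf]
        by_cases h : G.Adj u v
        · obtain ⟨hu, hv⟩ := (hcond u v huv).1 h
          simp [h, hu, hv]
        · have : ¬ (u ∈ S ∧ v ∈ S) := fun hc => h ((hcond u v huv).2 hc)
          by_cases hu : u ∈ S
          · have hv : v ∉ S := fun hv => this ⟨hu, hv⟩
            simp [h, hu, hv]
          · simp [h, hu]
    have hmσ : 2*(G.edgeFinset.card:ℝ) + (S.card:ℝ) = (S.card:ℝ)^2 := by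
      rw [← hsum2]
      calc ∑ u, ∑ v, A u v = ∑ u, ∑ v, f u * f v :=
            Finset.sum_congr rfl fun u _ => Finset.sum_congr rfl fun v _ => hstruct u v
        _ = (∑ u, f u) * (∑ v, f v) := by rw [← Finset.sum_mul_sum]
        _ = (S.card:ℝ)^2 := by rw [hfsum]; ring
    have hpsd : A.PosSemidef := by
      have : A = Matrix.conjTranspose (Matrix.replicateRow Unit f) * Matrix.replicateRow Unit f := by
        ext i j
        rw [Matrix.mul_apply]
        simp [Matrix.conjTranspose_apply, Matrix.replicateRow_apply, hstruct i j]
      rw [this]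
      exact Matrix.posSemidef_conjTranspose_mul_self _
    have hlamnn : ∀ i, 0 ≤ lam i := fun i => hpsd.eigenvalues_nonneg i
    have h1 : l1^2 ≤ (S.card:ℝ)^2 := by
      have : (lam i0)^2 ≤ ∑ i, (lam i)^2 :=
        Finset.single_le_sum (fun i _ => sq_nonneg (lam i)) (Finset.mem_univ i0)
      rw [hi0] at this
      rw [← hmσ, ← hsumlam2]
      exact this
    have h2 : (S.card:ℝ)^2 ≤ (S.card:ℝ) * l1 := by
      have : ∑ i, (lam i)^2 ≤ ∑ i, l1 * lam i := by
        apply Finset.sum_le_sum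
        intro i _
        rw [pow_two]
        exact mul_le_mul_of_nonneg_right (hub i) (hlamnn i)
      rw [hsumlam2, hmσ, ← Finset.mul_sum, hsumlam] at this
      linarith
    have hσnn : (0:ℝ) ≤ (S.card:ℝ) := Nat.cast_nonneg _
    rcases eq_or_lt_of_le hσnn with hσ0 | hσpos
    · have hsq : l1^2 = 0 := by
        have hz : ((S.card:ℝ))^2 = 0 := by rw [← hσ0]; norm_num
        have := sq_nonneg l1
        linarith [h1]
      have hl10 : l1 = 0 := by
        exact pow_eq_zero_iff two_ne_zero |>.1 hsq
      rw [hl10, hmσ, ← hσ0]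
      norm_num
    · have hge : (S.card:ℝ) ≤ l1 := by
        have h2' : (S.card:ℝ) * (S.card:ℝ) ≤ (S.card:ℝ) * l1 := by
          have : ((S.card:ℝ))^2 = (S.card:ℝ) * (S.card:ℝ) := sq ((S.card:ℝ)) ▸ by ring
          linarith [h2]
        exact le_of_mul_le_mul_left h2' hσpos
      have hle : l1 ≤ (S.card:ℝ) := by
        by_contra hlt
        push_neg at hlt
        have hlt2 : ((S.card:ℝ))^2 < l1^2 := by
          have := pow_lt_pow_left₀ hlt hσnn two_ne_zero
          exact this
        linarith [h1]
      have : l1 = (S.card:ℝ) := le_antisymm hle hge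
      rw [this, hmσ, Real.sqrt_sq hσnn]

end


/-- Theorem (equality case of `λ_1 ≤ √(2m + σ)`): `λ_1 = √(2m + σ)` if and only if
`G_S = K̂_σ ∪ (n − σ)K_1`, i.e. two distinct vertices `u, v` are adjacent in `G` exactly
when both `u ∈ S` and `v ∈ S`. -/
theorem stmt_8 (n : ℕ) (hn : 1 ≤ n) (G : SimpleGraph (Fin n)) [DecidableRel G.Adj]
    (S : Finset (Fin n))
    (hA : Matrix.IsHermitian
      (SimpleGraph.adjMatrix ℝ G + Matrix.diagonal (fun i => if i ∈ S then (1 : ℝ) else 0)))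
    (l1 : ℝ) (hl1 : IsGreatest (Set.range hA.eigenvalues) l1) :
    l1 = Real.sqrt (2 * (G.edgeFinset.card : ℝ) + (S.card : ℝ)) ↔
      ∀ u v : Fin n, u ≠ v → (G.Adj u v ↔ (u ∈ S ∧ v ∈ S)) := by
  exact main_aux G S hn hA l1 hl1
end

section
/- Let G_S be a graph with n ≥ 1 vertices, m edges and σ self-loops, with adjacency eigenvalues λ_1,…,λ_n. If μ_max = max_i |λ_i − σ/n| and μ_min = min_i |λ_i − σ/n|, then E(G_S) ≥ √( n(2m + σ − σ²/n) − (n²/3)(μ_max − μ_min)² ). -/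
open Matrix in
lemma eig_sums {n : ℕ} (A : Matrix (Fin n) (Fin n) ℝ) (hA : A.IsHermitian) :
    (∑ i, hA.eigenvalues i = A.trace) ∧ (∑ i, (hA.eigenvalues i)^2 = (A * A).trace) := by
  have key := hA.spectral_theorem
  set U := (hA.eigenvectorUnitary : Matrix (Fin n) (Fin n) ℝ) with hU
  have hsU : star U * U = 1 := Matrix.UnitaryGroup.star_mul_self _
  have hD : Matrix.diagonal ((RCLike.ofReal : ℝ → ℝ) ∘ hA.eigenvalues)
      = Matrix.diagonal hA.eigenvalues := by
    rw [RCLike.ofReal_real_eq_id]; rfl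
  rw [hD] at key
  rw [Unitary.conjStarAlgAut_apply, ← hU] at key
  constructor
  · conv_rhs => rw [key]
    rw [Matrix.trace_mul_comm, ← mul_assoc, hsU, one_mul, Matrix.trace_diagonal]
  · conv_rhs => rw [key]
    have : U * Matrix.diagonal hA.eigenvalues * star U * (U * Matrix.diagonal hA.eigenvalues * star U)
        = U * (Matrix.diagonal hA.eigenvalues * Matrix.diagonal hA.eigenvalues) * star U := by
      simp only [Matrix.mul_assoc]
      rw [← Matrix.mul_assoc (star U) U, hsU, Matrix.one_mul]
    rw [this, Matrix.trace_mul_comm, ← mul_assoc, hsU, one_mul,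
      Matrix.diagonal_mul_diagonal, Matrix.trace_diagonal]
    simp [sq]

/-- Theorem (via Ozeki's inequality): if `μ_max = max_i |λ_i − σ/n|` and
`μ_min = min_i |λ_i − σ/n|`, then
`E(G_S) ≥ √( n(2m + σ − σ²/n) − (n²/3)(μ_max − μ_min)² )`. -/
theorem stmt_11 (n : ℕ) (hn : 1 ≤ n) (G : SimpleGraph (Fin n)) [DecidableRel G.Adj]
    (S : Finset (Fin n))
    (hA : Matrix.IsHermitian
      (SimpleGraph.adjMatrix ℝ G + Matrix.diagonal (fun i => if i ∈ S then (1 : ℝ) else 0)))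
    (μmax μmin : ℝ)
    (hmax : IsGreatest (Set.range fun i => |hA.eigenvalues i - (S.card : ℝ) / n|) μmax)
    (hmin : IsLeast (Set.range fun i => |hA.eigenvalues i - (S.card : ℝ) / n|) μmin) :
    ∑ i, |hA.eigenvalues i - (S.card : ℝ) / n| ≥
      Real.sqrt ((n : ℝ) * (2 * (G.edgeFinset.card : ℝ) + (S.card : ℝ) - (S.card : ℝ) ^ 2 / n)
        - (n : ℝ) ^ 2 / 3 * (μmax - μmin) ^ 2) := by
  have hn0 : (0:ℝ) < n := by exact_mod_cast hn
  set A := SimpleGraph.adjMatrix ℝ G + Matrix.diagonal (fun i : Fin n => if i ∈ S then (1:ℝ) else 0) with hAdef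
  obtain ⟨h1, h2⟩ := eig_sums A hA
  set c : ℝ := (S.card : ℝ) / n with hc
  set lam := hA.eigenvalues with hlam
  -- trace computations
  have htr1 : A.trace = (S.card : ℝ) := by
    simp [hAdef, Matrix.trace_add, Matrix.trace_diagonal, Finset.sum_boole, Finset.filter_mem_eq_inter]
  have htr2 : (A * A).trace = 2 * (G.edgeFinset.card : ℝ) + (S.card : ℝ) := by
    have hdd : ∀ i : Fin n, (if i ∈ S then (1:ℝ) else 0) * (if i ∈ S then (1:ℝ) else 0)
        = (if i ∈ S then (1:ℝ) else 0) := by intro i; by_cases h : i ∈ S <;> simp [h]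
    rw [hAdef, add_mul, mul_add, mul_add, Matrix.trace_add, Matrix.trace_add, Matrix.trace_add]
    have t1 : (SimpleGraph.adjMatrix ℝ G * SimpleGraph.adjMatrix ℝ G).trace
        = 2 * (G.edgeFinset.card : ℝ) := by
      rw [Matrix.trace]
      simp only [Matrix.diag_apply, SimpleGraph.adjMatrix_mul_self_apply_self]
      rw [← Nat.cast_sum]
      rw [SimpleGraph.sum_degrees_eq_twice_card_edges]
      push_cast; ring
    have t2 : (SimpleGraph.adjMatrix ℝ G *
        Matrix.diagonal (fun i : Fin n => if i ∈ S then (1:ℝ) else 0)).trace = 0 := by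
      rw [Matrix.trace]; simp [Matrix.mul_diagonal]
    have t3 : (Matrix.diagonal (fun i : Fin n => if i ∈ S then (1:ℝ) else 0) *
        SimpleGraph.adjMatrix ℝ G).trace = 0 := by
      rw [Matrix.trace_mul_comm]; exact t2
    have t4 : (Matrix.diagonal (fun i : Fin n => if i ∈ S then (1:ℝ) else 0) *
        Matrix.diagonal (fun i : Fin n => if i ∈ S then (1:ℝ) else 0)).trace = (S.card : ℝ) := by
      rw [Matrix.diagonal_mul_diagonal, Matrix.trace_diagonal]
      simp only [hdd]
      simp [Finset.sum_boole, Finset.filter_mem_eq_inter]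
    rw [t1, t2, t3, t4]; ring
  rw [htr1] at h1; rw [htr2] at h2
  -- sum of squared deviations
  have hx2 : ∑ i, |lam i - c| ^ 2
      = 2 * (G.edgeFinset.card : ℝ) + (S.card : ℝ) - (S.card : ℝ) ^ 2 / n := by
    simp only [sq_abs]
    have expand : ∀ i ∈ Finset.univ, (lam i - c)^2 = lam i ^ 2 - 2*c*lam i + c^2 := by
      intros; ring
    rw [Finset.sum_congr rfl expand, Finset.sum_add_distrib, Finset.sum_sub_distrib,
      Finset.sum_const, Finset.card_univ, Fintype.card_fin, ← Finset.mul_sum, h1, h2, hc]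
    field_simp
    ring_nf
    field_simp
    ring
  -- bounds
  set SS := ∑ i, |lam i - c| with hSS
  have hub : ∀ i : Fin n, |lam i - c| ≤ μmax := fun i => hmax.2 ⟨i, rfl⟩
  have hlb : ∀ i : Fin n, μmin ≤ |lam i - c| := fun i => hmin.2 ⟨i, rfl⟩
  have hmin0 : 0 ≤ μmin := by obtain ⟨i, hi⟩ := hmin.1; rw [← hi]; positivity
  have hS0 : 0 ≤ SS := Finset.sum_nonneg fun i _ => abs_nonneg _
  have hquad : ∑ i, |lam i - c| ^ 2 ≤ (μmax + μmin) * SS - (n:ℝ) * (μmax * μmin) := by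
    have step : ∀ i ∈ Finset.univ, |lam i - c| ^ 2
        ≤ (μmax + μmin) * |lam i - c| - μmax * μmin := by
      intro i _
      nlinarith [mul_nonneg (sub_nonneg.2 (hlb i)) (sub_nonneg.2 (hub i))]
    calc ∑ i, |lam i - c| ^ 2
        ≤ ∑ i, ((μmax + μmin) * |lam i - c| - μmax * μmin) := Finset.sum_le_sum step
      _ = (μmax + μmin) * SS - (n:ℝ) * (μmax * μmin) := by
          rw [Finset.sum_sub_distrib, ← Finset.mul_sum, Finset.sum_const, Finset.card_univ,
            Fintype.card_fin, nsmul_eq_mul]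
  -- key inequality
  have key : (n : ℝ) * (2 * (G.edgeFinset.card : ℝ) + (S.card : ℝ) - (S.card : ℝ) ^ 2 / n)
      - (n : ℝ) ^ 2 / 3 * (μmax - μmin) ^ 2 ≤ SS ^ 2 := by
    rw [← hx2]
    nlinarith [mul_le_mul_of_nonneg_left hquad (le_of_lt hn0),
      sq_nonneg (2 * SS - (n:ℝ) * (μmax + μmin)), sq_nonneg (μmax - μmin),
      sq_nonneg ((n:ℝ) * (μmax - μmin))]
  calc Real.sqrt ((n : ℝ) * (2 * (G.edgeFinset.card : ℝ) + (S.card : ℝ) - (S.card : ℝ) ^ 2 / n)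
        - (n : ℝ) ^ 2 / 3 * (μmax - μmin) ^ 2)
      ≤ Real.sqrt (SS ^ 2) := Real.sqrt_le_sqrt key
    _ = SS := by rw [Real.sqrt_sq hS0]
end

section
/- Let x_1,…,x_n be real numbers (n ≥ 2) that are not all equal, with arithmetic mean x̄ = (1/n)∑_{i=1}^n x_i. Then ∑_{i=1}^n |x_i − x̄| ≥ 2∑_{i=1}^n (x_i − x̄)² / (max_i x_i − min_i x_i), with equality if and only if for every index k, x_k = max_i x_i whenever x_k > x̄ and x_k = min_i x_i whenever x_k < x̄. -/
/-- Cai et al.: for real numbers `x_1, …, x_n` (`n ≥ 2`) not all equal, with mean `x̄`,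
`∑ |x_i − x̄| ≥ 2∑ (x_i − x̄)² / (max_i x_i − min_i x_i)`, with equality iff for every `k`,
`x_k = max_i x_i` whenever `x_k > x̄` and `x_k = min_i x_i` whenever `x_k < x̄`. -/
theorem stmt_12 (n : ℕ) (hn : 2 ≤ n) (x : Fin n → ℝ) (hne : ∃ i j, x i ≠ x j)
    (M μ : ℝ) (hM : IsGreatest (Set.range x) M) (hμ : IsLeast (Set.range x) μ) :
    (∑ i, |x i - (∑ i, x i) / n|) ≥
      2 * (∑ i, (x i - (∑ i, x i) / n) ^ 2) / (M - μ) ∧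
    ((∑ i, |x i - (∑ i, x i) / n|) =
        2 * (∑ i, (x i - (∑ i, x i) / n) ^ 2) / (M - μ) ↔
      ∀ k, (x k > (∑ i, x i) / n → x k = M) ∧ (x k < (∑ i, x i) / n → x k = μ)) := by
  obtain ⟨i0, j0, hij⟩ := hne
  have hnpos : 0 < n := lt_of_lt_of_le (by norm_num) hn
  have hn0 : (n : ℝ) ≠ 0 := by positivity
  set xb : ℝ := (∑ i, x i) / n with hxb
  have hMx : ∀ i, x i ≤ M := fun i => hM.2 (Set.mem_range_self i)
  have hμx : ∀ i, μ ≤ x i := fun i => hμ.2 (Set.mem_range_self i)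
  have hμM : μ < M := by
    rcases hij.lt_or_gt with h | h
    · exact (hμx i0).trans_lt (h.trans_le (hMx j0))
    · exact (hμx j0).trans_lt (h.trans_le (hMx i0))
  have hsum0 : ∑ i, (x i - xb) = 0 := by
    rw [Finset.sum_sub_distrib, Finset.sum_const, Finset.card_univ, Fintype.card_fin,
      nsmul_eq_mul, hxb]
    field_simp
    ring
  set g : Fin n → ℝ := fun i =>
    (M - xb) * max (x i - xb) 0 + (xb - μ) * max (xb - x i) 0 - (x i - xb) ^ 2 with hg
  have hm : ∀ a : ℝ, max a 0 = (|a| + a) / 2 := by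
    intro a
    rcases le_total a 0 with h | h
    · rw [max_eq_right h, abs_of_nonpos h]; ring
    · rw [max_eq_left h, abs_of_nonneg h]; ring
  have key : ∀ i, g i = (M - μ) / 2 * |x i - xb| + (M - 2 * xb + μ) / 2 * (x i - xb)
      - (x i - xb) ^ 2 := by
    intro i
    simp only [hg, hm, abs_sub_comm xb (x i)]
    ring
  have hsumg : ∑ i, g i = (M - μ) / 2 * (∑ i, |x i - xb|) - ∑ i, (x i - xb) ^ 2 := by
    calc ∑ i, g i
        = ∑ i, ((M - μ) / 2 * |x i - xb| + (M - 2 * xb + μ) / 2 * (x i - xb)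
            - (x i - xb) ^ 2) := Finset.sum_congr rfl fun i _ => key i
      _ = ((M - μ) / 2 * ∑ i, |x i - xb|) + ((M - 2 * xb + μ) / 2 * ∑ i, (x i - xb))
            - ∑ i, (x i - xb) ^ 2 := by
          rw [Finset.sum_sub_distrib, Finset.sum_add_distrib, Finset.mul_sum, Finset.mul_sum]
      _ = _ := by rw [hsum0]; ring
  have hgiff : ∀ i, 0 ≤ g i ∧ (g i = 0 ↔ ((x i > xb → x i = M) ∧ (x i < xb → x i = μ))) := by
    intro i
    rcases lt_trichotomy (x i) xb with h | h | h
    · have e : g i = (xb - x i) * (x i - μ) := by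
        simp only [hg, max_eq_right (by linarith : x i - xb ≤ 0),
          max_eq_left (by linarith : (0:ℝ) ≤ xb - x i)]
        ring
      constructor
      · rw [e]; exact mul_nonneg (by linarith) (by linarith [hμx i])
      · rw [e]
        constructor
        · intro h0
          refine ⟨fun hc => absurd hc (not_lt.2 h.le), fun _ => ?_⟩
          rcases mul_eq_zero.1 h0 with h1 | h1 <;> linarith
        · rintro ⟨_, h2⟩
          rw [h2 h]; ring
    · have e : g i = 0 := by
        simp [hg, h]
      refine ⟨e.ge, ?_⟩
      rw [e]
      simp only [eq_self_iff_true, true_iff]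
      exact ⟨fun hc => absurd hc (by simp [h]), fun hc => absurd hc (by simp [h])⟩
    · have e : g i = (x i - xb) * (M - x i) := by
        simp only [hg, max_eq_left (by linarith : (0:ℝ) ≤ x i - xb),
          max_eq_right (by linarith : xb - x i ≤ 0)]
        ring
      constructor
      · rw [e]; exact mul_nonneg (by linarith) (by linarith [hMx i])
      · rw [e]
        constructor
        · intro h0
          refine ⟨fun _ => ?_, fun hc => absurd hc (not_lt.2 h.le)⟩
          rcases mul_eq_zero.1 h0 with h1 | h1 <;> linarith
        · rintro ⟨h1, _⟩
          rw [h1 h]; ring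
  have hA0 : (0:ℝ) ≤ ∑ i, g i := Finset.sum_nonneg fun i _ => (hgiff i).1
  have hineq : 2 * (∑ i, (x i - xb) ^ 2) ≤ (M - μ) * ∑ i, |x i - xb| := by
    rw [hsumg] at hA0; linarith
  constructor
  · rw [ge_iff_le, div_le_iff₀ (by linarith : (0:ℝ) < M - μ)]
    linarith
  · rw [eq_div_iff (by intro hc; linarith : (M - μ) ≠ 0)]
    constructor
    · intro h
      have hz : ∑ i, g i = 0 := by rw [hsumg]; linarith
      intro k
      exact (hgiff k).2.1
        ((Finset.sum_eq_zero_iff_of_nonneg fun i _ => (hgiff i).1).1 hz k (Finset.mem_univ k))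
    · intro h
      have hz : ∑ i, g i = 0 := Finset.sum_eq_zero fun i _ => (hgiff i).2.2 (h i)
      rw [hsumg] at hz
      linarith
end

section
/- Let G_S be a graph with n ≥ 1 vertices, m edges and σ self-loops, with adjacency eigenvalues λ_1 ≥ … ≥ λ_n not all equal. Then E(G_S) ≥ (4m + 2σ − 2σ²/n) / (λ_1 − λ_n), with equality if and only if for every index k, λ_k = λ_1 whenever λ_k > σ/n and λ_k = λ_n whenever λ_k < σ/n. -/
open Matrix in
private lemma myTrace_eq_sum_eig {n : Type*} [Fintype n] [DecidableEq n] {A : Matrix n n ℝ}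
    (hA : A.IsHermitian) : A.trace = ∑ i, hA.eigenvalues i := by
  conv_lhs => rw [hA.spectral_theorem, Unitary.conjStarAlgAut_apply]
  rw [trace_mul_cycle,
    (Matrix.mem_unitaryGroup_iff').mp (hA.eigenvectorUnitary).2, one_mul, trace_diagonal]
  simp

open Matrix in
private lemma myTrace_sq_eq_sum_eig {n : Type*} [Fintype n] [DecidableEq n] {A : Matrix n n ℝ}
    (hA : A.IsHermitian) : (A * A).trace = ∑ i, hA.eigenvalues i ^ 2 := by
  conv_lhs => rw [hA.spectral_theorem, Unitary.conjStarAlgAut_apply]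
  rw [show ∀ U D Uh : Matrix n n ℝ, (U*D*Uh) * (U*D*Uh) = U*(D*((Uh*U)*D))*Uh from
    fun U D Uh => by simp only [Matrix.mul_assoc],
    (Matrix.mem_unitaryGroup_iff').mp (hA.eigenvectorUnitary).2, one_mul,
    trace_mul_cycle,
    (Matrix.mem_unitaryGroup_iff').mp (hA.eigenvectorUnitary).2, one_mul,
    diagonal_mul_diagonal, trace_diagonal]
  simp [pow_two]

open Matrix SimpleGraph in
private lemma myTrace_adj (n : ℕ) (G : SimpleGraph (Fin n)) [DecidableRel G.Adj]
    (S : Finset (Fin n)) :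
    (SimpleGraph.adjMatrix ℝ G + Matrix.diagonal (fun i => if i ∈ S then (1 : ℝ) else 0)).trace
      = S.card := by
  simp [Matrix.trace, Matrix.diag]

open Matrix SimpleGraph in
private lemma myTrace_sq_adj (n : ℕ) (G : SimpleGraph (Fin n)) [DecidableRel G.Adj]
    (S : Finset (Fin n)) :
    ((SimpleGraph.adjMatrix ℝ G + Matrix.diagonal (fun i => if i ∈ S then (1 : ℝ) else 0)) *
     (SimpleGraph.adjMatrix ℝ G + Matrix.diagonal (fun i => if i ∈ S then (1 : ℝ) else 0))).trace
      = 2 * G.edgeFinset.card + S.card := by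
  set A := SimpleGraph.adjMatrix ℝ G + Matrix.diagonal (fun i => if i ∈ S then (1 : ℝ) else 0)
    with hAdef
  have h : ∀ i j, A i j * A j i = adjMatrix ℝ G i j + (if i = j ∧ i ∈ S then 1 else 0) := by
    intro i j
    by_cases hij : i = j
    · subst hij; simp [A, Matrix.diagonal_apply_eq]
    · simp only [hAdef, Matrix.add_apply, Matrix.diagonal_apply_ne _ hij,
        Matrix.diagonal_apply_ne _ (Ne.symm hij), add_zero, adjMatrix_apply, hij,
        false_and, if_false]
      by_cases h : G.Adj i j
      · simp [h, G.adj_symm h]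
      · simp [h, fun hji => h (G.adj_symm hji)]
  rw [Matrix.trace]
  simp only [Matrix.diag_apply, Matrix.mul_apply]
  simp only [h, Finset.sum_add_distrib]
  have h1 : ∑ i : Fin n, ∑ j : Fin n, adjMatrix ℝ G i j = 2 * G.edgeFinset.card := by
    have : ∀ i : Fin n, ∑ j : Fin n, adjMatrix ℝ G i j = (G.degree i : ℝ) := by
      intro i
      simp [adjMatrix_apply, SimpleGraph.degree, neighborFinset_eq_filter, Finset.sum_boole]
    simp only [this]
    rw [← Nat.cast_sum, SimpleGraph.sum_degrees_eq_twice_card_edges]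
    push_cast; ring
  have h2 : ∑ i : Fin n, ∑ j : Fin n, (if i = j ∧ i ∈ S then (1:ℝ) else 0) = S.card := by
    have : ∀ i : Fin n, ∑ j : Fin n, (if i = j ∧ i ∈ S then (1:ℝ) else 0)
        = if i ∈ S then 1 else 0 := by
      intro i
      rw [Finset.sum_eq_single i] <;> simp +contextual [eq_comm]
    simp [this, Finset.sum_boole]
  rw [h1, h2]

set_option maxHeartbeats 1600000 in
/-- Theorem 11: `E(G_S) ≥ (4m + 2σ − 2σ²/n) / (λ_1 − λ_n)` where `λ_1` and `λ_n` are the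
largest and smallest adjacency eigenvalues of `G_S` (not all eigenvalues equal), with
equality iff for every `k`, `λ_k = λ_1` whenever `λ_k > σ/n` and `λ_k = λ_n` whenever
`λ_k < σ/n`. -/
theorem stmt_13 (n : ℕ) (hn : 1 ≤ n) (G : SimpleGraph (Fin n)) [DecidableRel G.Adj]
    (S : Finset (Fin n))
    (hA : Matrix.IsHermitian
      (SimpleGraph.adjMatrix ℝ G + Matrix.diagonal (fun i => if i ∈ S then (1 : ℝ) else 0)))
    (hne : ∃ i j, hA.eigenvalues i ≠ hA.eigenvalues j)
    (l1 ln : ℝ) (hl1 : IsGreatest (Set.range hA.eigenvalues) l1)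
    (hln : IsLeast (Set.range hA.eigenvalues) ln) :
    (∑ i, |hA.eigenvalues i - (S.card : ℝ) / n|) ≥
      (4 * (G.edgeFinset.card : ℝ) + 2 * (S.card : ℝ) - 2 * (S.card : ℝ) ^ 2 / n) / (l1 - ln) ∧
    ((∑ i, |hA.eigenvalues i - (S.card : ℝ) / n|) =
        (4 * (G.edgeFinset.card : ℝ) + 2 * (S.card : ℝ) - 2 * (S.card : ℝ) ^ 2 / n) / (l1 - ln) ↔
      ∀ k, (hA.eigenvalues k > (S.card : ℝ) / n → hA.eigenvalues k = l1) ∧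
           (hA.eigenvalues k < (S.card : ℝ) / n → hA.eigenvalues k = ln)) := by
  have hn0 : (n : ℝ) ≠ 0 := Nat.cast_ne_zero.mpr (by omega)
  set f : Fin n → ℝ := hA.eigenvalues with hf
  set c : ℝ := (S.card : ℝ) / n with hc
  set m : ℝ := (G.edgeFinset.card : ℝ) with hm
  set σ : ℝ := (S.card : ℝ) with hσ
  -- trace identities
  have hsum : ∑ i, f i = σ := by
    rw [← myTrace_eq_sum_eig hA, myTrace_adj]
  have hsumsq : ∑ i, f i ^ 2 = 2 * m + σ := by
    rw [← myTrace_sq_eq_sum_eig hA, myTrace_sq_adj]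
  -- bounds
  have hub : ∀ i, f i ≤ l1 := fun i => hl1.2 ⟨i, rfl⟩
  have hlb : ∀ i, ln ≤ f i := fun i => hln.2 ⟨i, rfl⟩
  have hlt : ln < l1 := by
    obtain ⟨i, j, hij⟩ := hne
    rcases lt_or_ge ln l1 with h | h
    · exact h
    · exact absurd (le_antisymm (le_trans (hub i) (h.trans (hlb j)))
        (le_trans (hub j) (h.trans (hlb i)))) hij
  have hl1c : c ≤ l1 := by
    -- l1 ≥ mean = c
    by_contra hcon
    push_neg at hcon
    have : ∑ i, f i < ∑ _i : Fin n, c :=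
      Finset.sum_lt_sum_of_nonempty (by simp [Finset.univ_nonempty_iff]; exact Fin.pos_iff_nonempty.mp (by omega)) (fun i _ => lt_of_le_of_lt (hub i) hcon)
    rw [hsum, Finset.sum_const, Finset.card_univ, Fintype.card_fin, nsmul_eq_mul] at this
    rw [hc] at this
    field_simp at this
    exact lt_irrefl _ this
  have hlnc : ln ≤ c := by
    by_contra hcon
    push_neg at hcon
    have : ∑ _i : Fin n, c < ∑ i, f i :=
      Finset.sum_lt_sum_of_nonempty (by simp [Finset.univ_nonempty_iff]; exact Fin.pos_iff_nonempty.mp (by omega)) (fun i _ => lt_of_lt_of_le hcon (hlb i))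
    rw [hsum, Finset.sum_const, Finset.card_univ, Fintype.card_fin, nsmul_eq_mul] at this
    rw [hc] at this
    field_simp at this
    exact lt_irrefl _ this
  -- centered sums
  have hμsum : ∑ i, (f i - c) = 0 := by
    rw [Finset.sum_sub_distrib, hsum, Finset.sum_const, Finset.card_univ, Fintype.card_fin,
      nsmul_eq_mul, hc]
    field_simp
    ring
  have hμsq : ∑ i, (f i - c) ^ 2 = 2 * m + σ - σ ^ 2 / n := by
    have : ∀ i, (f i - c) ^ 2 = f i ^ 2 - 2 * c * f i + c ^ 2 := fun i => by ring
    simp only [this]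
    rw [Finset.sum_add_distrib, Finset.sum_sub_distrib, hsumsq, ← Finset.mul_sum, hsum,
      Finset.sum_const, Finset.card_univ, Fintype.card_fin, nsmul_eq_mul, hc]
    field_simp
    ring
  set E : ℝ := ∑ i, |f i - c| with hE
  -- positive/negative part split
  have hsplit : ∀ i, max (f i - c) 0 + max (c - f i) 0 = |f i - c| := by
    intro i
    rcases le_total c (f i) with h | h
    · rw [abs_of_nonneg (by linarith), max_eq_left (by linarith), max_eq_right (by linarith)]
      ring
    · rw [abs_of_nonpos (by linarith), max_eq_right (by linarith), max_eq_left (by linarith)]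
      ring
  have hsplit2 : ∀ i, max (f i - c) 0 - max (c - f i) 0 = f i - c := by
    intro i
    rcases le_total c (f i) with h | h
    · rw [max_eq_left (by linarith), max_eq_right (by linarith)]; ring
    · rw [max_eq_right (by linarith), max_eq_left (by linarith)]; ring
  have hSp : ∑ i, max (f i - c) 0 = E / 2 := by
    have h1 : ∑ i, (max (f i - c) 0 + max (c - f i) 0) = E := by
      simp only [hsplit]
      exact hE.symm
    have h2 : ∑ i, (max (f i - c) 0 - max (c - f i) 0) = 0 := by
      simp only [hsplit2]; exact hμsum
    rw [Finset.sum_add_distrib] at h1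
    rw [Finset.sum_sub_distrib] at h2
    linarith
  have hSm : ∑ i, max (c - f i) 0 = E / 2 := by
    have h1 : ∑ i, (max (f i - c) 0 + max (c - f i) 0) = E := by
      simp only [hsplit]
      exact hE.symm
    rw [Finset.sum_add_distrib] at h1
    linarith [hSp]
  -- the slack function
  set g : Fin n → ℝ := fun i =>
    (l1 - c) * max (f i - c) 0 + (c - ln) * max (c - f i) 0 - (f i - c) ^ 2 with hg
  have hg0 : ∀ i, 0 ≤ g i := by
    intro i
    rcases le_total c (f i) with h | h
    · have := hub i
      rw [hg]; dsimp only
      rw [max_eq_left (by linarith), max_eq_right (by linarith)]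
      nlinarith
    · have := hlb i
      rw [hg]; dsimp only
      rw [max_eq_right (by linarith), max_eq_left (by linarith)]
      nlinarith
  have hgsum : ∑ i, g i = (l1 - ln) * (E / 2) - (2 * m + σ - σ ^ 2 / n) := by
    rw [hg]
    simp only [Finset.sum_sub_distrib, Finset.sum_add_distrib, ← Finset.mul_sum, hSp, hSm, hμsq]
    ring
  have hnum : 4 * m + 2 * σ - 2 * σ ^ 2 / n = 2 * (2 * m + σ - σ ^ 2 / n) := by ring
  have hposd : (0:ℝ) < l1 - ln := by linarith
  have hrw : (l1 - ln) * (E / 2) = E * (l1 - ln) / 2 := by ring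
  have key : 2 * (2 * m + σ - σ ^ 2 / n) ≤ E * (l1 - ln) := by
    have h0 : (0:ℝ) ≤ ∑ i, g i := Finset.sum_nonneg fun i _ => hg0 i
    rw [hgsum, hrw] at h0; linarith
  constructor
  · rw [ge_iff_le, div_le_iff₀ hposd, hnum]
    exact key
  · rw [hnum, eq_div_iff (ne_of_gt hposd)]
    constructor
    · intro heq
      have hzero : ∑ i, g i = 0 := by rw [hgsum]; linarith [hrw]
      have hall : ∀ i ∈ Finset.univ, g i = 0 :=
        (Finset.sum_eq_zero_iff_of_nonneg (fun i _ => hg0 i)).mp hzero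
      intro k
      have hk := hall k (Finset.mem_univ k)
      constructor
      · intro hgt
        rw [hg] at hk; dsimp only at hk
        rw [max_eq_left (by linarith), max_eq_right (by linarith)] at hk
        have hfac : (f k - c) * (l1 - f k) = 0 := by linear_combination hk
        rcases mul_eq_zero.mp hfac with h | h
        · linarith
        · linarith
      · intro hltk
        rw [hg] at hk; dsimp only at hk
        rw [max_eq_right (by linarith), max_eq_left (by linarith)] at hk
        have hfac : (c - f k) * (f k - ln) = 0 := by linear_combination hk
        rcases mul_eq_zero.mp hfac with h | h
        · linarith
        · linarith
    · intro hcond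
      have hallg : ∀ i ∈ Finset.univ, g i = 0 := by
        intro i _
        rcases lt_trichotomy (f i) c with h | h | h
        · have hfi := (hcond i).2 h
          have e1 : max (f i - c) 0 = 0 := max_eq_right (by linarith)
          have e2 : max (c - f i) 0 = c - f i := max_eq_left (by linarith)
          rw [hg]; dsimp only; rw [e1, e2]
          linear_combination (c - f i) * hfi
        · have e1 : max (f i - c) 0 = 0 := max_eq_right (by linarith)
          have e2 : max (c - f i) 0 = 0 := max_eq_right (by linarith)
          rw [hg]; dsimp only; rw [e1, e2]
          linear_combination (c - f i) * h
        · have hfi := (hcond i).1 h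
          have e1 : max (f i - c) 0 = f i - c := max_eq_left (by linarith)
          have e2 : max (c - f i) 0 = 0 := max_eq_right (by linarith)
          rw [hg]; dsimp only; rw [e1, e2]
          linear_combination (c - f i) * hfi
      have hzero : ∑ i, g i = 0 := Finset.sum_eq_zero fun i hi => hallg i hi
      rw [hgsum] at hzero
      linarith [hrw]
end
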